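/- arXiv:2603.13807 — 8 statements merged into one kernel-verified Lean document; each statement's English description precedes it below -/
import Mathlib

section
/- For n ∈ {1, 2} experts and every finite rationality level λ > 0, majority voting is an optimal robust aggregator: sup_{θ̂ ∈ Θ̂^ciid_λ} R(f^maj, θ̂) = min over aggregators f of sup_{θ̂ ∈ Θ̂^ciid_λ} R(f, θ̂). -/
open Real Finset

/-- Quantal response function `ψ_λ(p) = 1/(1 + exp(2λ(1−2p)))`. -/
noncomputable def psi (lam p : ℝ) : ℝ := 1 / (1 + Real.exp (2 * lam * (1 - 2 * p)))

/-- A c.i.i.d. signal structure with finite signal set `Fin k`: prior `prior = Pr[ω = 1]`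
and conditional signal laws `nu0 s = Pr[S_i = s | ω = 0]`, `nu1 s = Pr[S_i = s | ω = 1]`,
common to all experts, with signals i.i.d. conditionally on `ω`. -/
structure SignalStructure where
  k : ℕ
  prior : ℝ
  nu0 : Fin k → ℝ
  nu1 : Fin k → ℝ
  prior_nonneg : 0 ≤ prior
  prior_le_one : prior ≤ 1
  nu0_nonneg : ∀ s, 0 ≤ nu0 s
  nu1_nonneg : ∀ s, 0 ≤ nu1 s
  nu0_sum : ∑ s, nu0 s = 1
  nu1_sum : ∑ s, nu1 s = 1

/-- Posterior `Pr_θ[ω = 1 | S_i = s]` (set to `0` on null signals). -/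
noncomputable def posterior (θ : SignalStructure) (s : Fin θ.k) : ℝ :=
  if θ.prior * θ.nu1 s + (1 - θ.prior) * θ.nu0 s = 0 then 0
  else θ.prior * θ.nu1 s / (θ.prior * θ.nu1 s + (1 - θ.prior) * θ.nu0 s)

/-- `Pr[X_i = 1 | ω = w]` when each expert reports `1` with probability
`ψ(Pr_θ[ω = 1 | S_i = s])` given its signal `s`. -/
noncomputable def reportProb (θ : SignalStructure) (ψ : ℝ → ℝ) (w : Bool) : ℝ :=
  ∑ s, (if w then θ.nu1 s else θ.nu0 s) * ψ (posterior θ s)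

/-- The joint law of `(ω, X_1, …, X_n)` in which `Pr[ω = 1] = μ` and, conditionally
on `ω`, the binary reports `X_i` are i.i.d. with `Pr[X_i = 1 | ω = 1] = q1` and
`Pr[X_i = 1 | ω = 0] = q0`. -/
noncomputable def repOf (n : ℕ) (μ q0 q1 : ℝ) : Bool → (Fin n → Bool) → ℝ :=
  fun w x =>
    (if w then μ else 1 - μ) *
      ∏ i, (if x i then (if w then q1 else q0) else 1 - (if w then q1 else q0))

/-- The report structure `rep(θ, ψ)`: the joint law of `(ω, X_1, …, X_n)` induced
by the signal structure `θ` and the response function `ψ`. -/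
noncomputable def rep (n : ℕ) (θ : SignalStructure) (ψ : ℝ → ℝ) :
    Bool → (Fin n → Bool) → ℝ :=
  repOf n θ.prior (reportProb θ ψ false) (reportProb θ ψ true)

/-- The set `Θ̂^ciid_λ` of report structures induced by all c.i.i.d. signal structures. -/
noncomputable def repSet (n : ℕ) (lam : ℝ) : Set (Bool → (Fin n → Bool) → ℝ) :=
  {r | ∃ θ : SignalStructure, rep n θ (psi lam) = r}

/-- `Pr[ω = w, X = x]` where `X = Σ_i X_i` counts the experts reporting `1`. -/
noncomputable def jointProb (n : ℕ) (r : Bool → (Fin n → Bool) → ℝ) (w : Bool) (x : ℕ) : ℝ :=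
  ∑ v : Fin n → Bool,
    if (Finset.univ.filter (fun i => v i = true)).card = x then r w v else 0

/-- Utility `U(f, θ̂) = Σ_x Pr[X=x]·(2Pr[ω=1|X=x]−1)·(2f(x)−1)
             = Σ_x (2f(x)−1)·(Pr[ω=1,X=x] − Pr[ω=0,X=x])`. -/
noncomputable def U (n : ℕ) (f : ℕ → ℝ) (r : Bool → (Fin n → Bool) → ℝ) : ℝ :=
  ∑ x ∈ Finset.range (n + 1),
    (2 * f x - 1) * (jointProb n r true x - jointProb n r false x)

/-- The omniscient aggregator `opt_θ̂`: sends `x` to `1`, `1/2`, `0` according as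
`Pr[ω=1 | X=x]` is `>`, `=`, `<` `1/2`. -/
noncomputable def optAgg (n : ℕ) (r : Bool → (Fin n → Bool) → ℝ) : ℕ → ℝ := fun x =>
  if jointProb n r false x < jointProb n r true x then 1
  else if jointProb n r true x = jointProb n r false x then 1 / 2
  else 0

/-- Regret `R(f, θ̂) = U(opt_θ̂, θ̂) − U(f, θ̂)`. -/
noncomputable def regret (n : ℕ) (f : ℕ → ℝ) (r : Bool → (Fin n → Bool) → ℝ) : ℝ :=
  U n (optAgg n r) r - U n f r

/-- An aggregator `f : {0,…,n} → [0,1]`. -/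
def IsAggregator (f : ℕ → ℝ) : Prop := ∀ x, 0 ≤ f x ∧ f x ≤ 1

/-- Majority voting `f^maj`. -/
noncomputable def fmaj (n : ℕ) : ℕ → ℝ := fun x =>
  if 2 * x < n then 0 else if 2 * x = n then 1 / 2 else 1

/-- Worst-case regret of aggregator `f` over all c.i.i.d.-induced report structures. -/
noncomputable def worstRegret (n : ℕ) (lam : ℝ) (f : ℕ → ℝ) : ℝ :=
  sSup {t : ℝ | ∃ r ∈ repSet n lam, t = regret n f r}

/-! Relabelling the state, `ω ↦ 1 - ω`, maps a c.i.i.d. signal structure to another one and,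
because `ψ_λ(1 - p) = 1 - ψ_λ(p)`, turns the regret of an aggregator `f` into the regret of its
dual `x ↦ 1 - f (n - x)` on the original report structure. For `n ≤ 2` the utility of majority
voting exceeds the average utility of `f` and its dual by `(1 + f 0 - f n)` times
`Pr[X_i = ω] - Pr[X_i ≠ ω]`, and this is nonnegative because `ψ_λ(p) - 1/2` has the sign of
`p - 1/2`. So the regret of majority voting on any structure is at most the average regret of `f`
on that structure and on its relabelling, hence at most the worst-case regret of `f`. -/

lemma psi_nonneg (lam p : ℝ) : 0 ≤ psi lam p := by
  unfold psi; positivity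

lemma psi_le_one (lam p : ℝ) : psi lam p ≤ 1 := by
  rw [psi, div_le_one (by positivity)]
  linarith [Real.exp_pos (2 * lam * (1 - 2 * p))]

lemma psi_one_sub (lam p : ℝ) : psi lam (1 - p) = 1 - psi lam p := by
  have h : 2 * lam * (1 - 2 * (1 - p)) = -(2 * lam * (1 - 2 * p)) := by ring
  have := Real.exp_pos (2 * lam * (1 - 2 * p))
  rw [psi, psi, h, Real.exp_neg]
  field_simp
  ring

lemma psi_half (lam : ℝ) : psi lam (1 / 2) = 1 / 2 := by
  norm_num [psi]

lemma psi_monotone {lam : ℝ} (hlam : 0 ≤ lam) : Monotone (psi lam) := by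
  intro p p' hp
  unfold psi
  gcongr

lemma two_mul_sub_one_mul_psi_nonneg {lam : ℝ} (hlam : 0 ≤ lam) (p : ℝ) :
    0 ≤ (2 * p - 1) * (2 * psi lam p - 1) := by
  rcases le_total (1 / 2) p with hp | hp
  · have := psi_half lam ▸ psi_monotone hlam hp
    apply mul_nonneg <;> linarith
  · have := psi_half lam ▸ psi_monotone hlam hp
    apply mul_nonneg_of_nonpos_of_nonpos <;> linarith

lemma card_filter_card_filter_eq_choose (n x : ℕ) :
    #{v : Fin n → Bool | #{i | v i = true} = x} = n.choose x := by
  have h := card_powersetCard x (univ : Finset (Fin n))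
  rw [card_univ, Fintype.card_fin] at h
  rw [← h]
  refine card_nbij' (fun v => ({i | v i = true} : Finset (Fin n))) (fun s i => decide (i ∈ s))
    ?_ ?_ ?_ ?_
  · intro v hv; simpa using hv
  · intro s hs; simpa using (mem_powersetCard.1 hs).2
  · intro v _; funext i; simp
  · intro s _; ext i; simp

lemma prod_bool_ite_eq_pow_mul_pow (n : ℕ) (v : Fin n → Bool) (a b : ℝ) :
    ∏ i, (if v i then a else b) = a ^ #{i | v i = true} * b ^ (n - #{i | v i = true}) := by
  rw [Finset.prod_ite, prod_const, prod_const]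
  congr 2
  have h := card_filter_add_card_filter_not (s := univ) (fun i => v i = true)
  rw [card_univ, Fintype.card_fin] at h
  omega

lemma jointProb_repOf (n : ℕ) (μ q0 q1 : ℝ) (w : Bool) (x : ℕ) :
    jointProb n (repOf n μ q0 q1) w x =
      (if w then μ else 1 - μ) *
        (n.choose x * (if w then q1 else q0) ^ x * (1 - (if w then q1 else q0)) ^ (n - x)) := by
  have hterm : ∀ v : Fin n → Bool,
      (if #{i | v i = true} = x then repOf n μ q0 q1 w v else 0) =
        if #{i | v i = true} = x then
          (if w then μ else 1 - μ) *
            ((if w then q1 else q0) ^ x * (1 - (if w then q1 else q0)) ^ (n - x))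
        else 0 := by
    intro v
    by_cases h : #{i | v i = true} = x
    · rw [if_pos h, if_pos h, repOf, prod_bool_ite_eq_pow_mul_pow, h]
    · rw [if_neg h, if_neg h]
  rw [jointProb, sum_congr rfl fun v _ => hterm v, ← sum_filter, sum_const,
    card_filter_card_filter_eq_choose, nsmul_eq_mul]
  ring

namespace SignalStructure

def flip (θ : SignalStructure) : SignalStructure where
  k := θ.k
  prior := 1 - θ.prior
  nu0 := θ.nu1
  nu1 := θ.nu0
  prior_nonneg := by linarith [θ.prior_le_one]
  prior_le_one := by linarith [θ.prior_nonneg]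
  nu0_nonneg := θ.nu1_nonneg
  nu1_nonneg := θ.nu0_nonneg
  nu0_sum := θ.nu1_sum
  nu1_sum := θ.nu0_sum

noncomputable instance : Inhabited SignalStructure :=
  ⟨{ k := 1, prior := 1 / 2, nu0 := fun _ => 1, nu1 := fun _ => 1
     prior_nonneg := by norm_num, prior_le_one := by norm_num
     nu0_nonneg := fun _ => zero_le_one, nu1_nonneg := fun _ => zero_le_one
     nu0_sum := by simp, nu1_sum := by simp }⟩

variable (θ : SignalStructure) {ψ : ℝ → ℝ}

lemma prior_ite_nonneg (w : Bool) : 0 ≤ (if w then θ.prior else 1 - θ.prior) := by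
  cases w <;> simp [θ.prior_nonneg, θ.prior_le_one]

lemma nu_nonneg (w : Bool) (s : Fin θ.k) : 0 ≤ (if w then θ.nu1 s else θ.nu0 s) := by
  cases w <;> simp [θ.nu0_nonneg, θ.nu1_nonneg]

lemma sum_nu (w : Bool) : ∑ s, (if w then θ.nu1 s else θ.nu0 s) = 1 := by
  cases w <;> simp [θ.nu0_sum, θ.nu1_sum]

lemma posterior_flip {s : Fin θ.k} (hs : θ.prior * θ.nu1 s + (1 - θ.prior) * θ.nu0 s ≠ 0) :
    posterior θ.flip s = 1 - posterior θ s := by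
  set d := (1 - θ.prior) * θ.nu0 s + (1 - (1 - θ.prior)) * θ.nu1 s
  have hd : d ≠ 0 := by convert hs using 1; ring
  unfold posterior
  rw [if_neg hs]
  change (if d = 0 then 0 else (1 - θ.prior) * θ.nu0 s / d) = _
  rw [if_neg hd]
  field_simp
  ring

lemma reportProb_nonneg (hψ : ∀ p, 0 ≤ ψ p) (w : Bool) : 0 ≤ reportProb θ ψ w :=
  sum_nonneg fun s _ => mul_nonneg (θ.nu_nonneg w s) (hψ _)

lemma reportProb_le_one (hψ : ∀ p, ψ p ≤ 1) (w : Bool) : reportProb θ ψ w ≤ 1 := by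
  calc reportProb θ ψ w ≤ ∑ s, (if w then θ.nu1 s else θ.nu0 s) :=
        sum_le_sum fun s _ => mul_le_of_le_one_right (θ.nu_nonneg w s) (hψ _)
    _ = 1 := θ.sum_nu w

lemma reportProb_flip (hψ : ∀ p, ψ (1 - p) = 1 - ψ p)
    (w : Bool) (hw : (if w then θ.prior else 1 - θ.prior) ≠ 0) :
    reportProb θ.flip ψ (!w) = 1 - reportProb θ ψ w := by
  have hterm : ∀ s, (if !w then θ.flip.nu1 s else θ.flip.nu0 s) * ψ (posterior θ.flip s) =
      (if w then θ.nu1 s else θ.nu0 s) * (1 - ψ (posterior θ s)) := by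
    intro s
    have hnu : (if !w then θ.flip.nu1 s else θ.flip.nu0 s) =
        if w then θ.nu1 s else θ.nu0 s := by
      cases w <;> rfl
    rw [hnu]
    rcases (θ.nu_nonneg w s).eq_or_lt with h0 | hpos
    · rw [← h0, zero_mul, zero_mul]
    · have hs : θ.prior * θ.nu1 s + (1 - θ.prior) * θ.nu0 s ≠ 0 := by
        have := θ.prior_nonneg; have := θ.prior_le_one
        have := θ.nu0_nonneg s; have := θ.nu1_nonneg s
        have hw' := lt_of_le_of_ne (θ.prior_ite_nonneg w) (Ne.symm hw)
        cases w <;> simp only [Bool.false_eq_true, if_false, if_true] at hpos hw' <;> positivity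
      rw [θ.posterior_flip hs, hψ]
  calc reportProb θ.flip ψ (!w)
      = ∑ s : Fin θ.k, (if w then θ.nu1 s else θ.nu0 s) * (1 - ψ (posterior θ s)) :=
        sum_congr rfl fun s _ => hterm s
    _ = 1 - reportProb θ ψ w := by
        simp only [mul_one_sub, sum_sub_distrib, θ.sum_nu, reportProb]

lemma joint_sub_mul_response_nonneg (hψ : ∀ p, 0 ≤ (2 * p - 1) * (2 * ψ p - 1))
    (s : Fin θ.k) :
    0 ≤ (θ.prior * θ.nu1 s - (1 - θ.prior) * θ.nu0 s) * (2 * ψ (posterior θ s) - 1) := by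
  have ha : 0 ≤ θ.prior * θ.nu1 s := mul_nonneg θ.prior_nonneg (θ.nu1_nonneg s)
  have hb : 0 ≤ (1 - θ.prior) * θ.nu0 s :=
    mul_nonneg (sub_nonneg.2 θ.prior_le_one) (θ.nu0_nonneg s)
  by_cases hs : θ.prior * θ.nu1 s + (1 - θ.prior) * θ.nu0 s = 0
  · rw [show θ.prior * θ.nu1 s - (1 - θ.prior) * θ.nu0 s = 0 by linarith, zero_mul]
  · have hdiff : θ.prior * θ.nu1 s - (1 - θ.prior) * θ.nu0 s =
        (θ.prior * θ.nu1 s + (1 - θ.prior) * θ.nu0 s) * (2 * posterior θ s - 1) := by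
      rw [posterior, if_neg hs]; field_simp; ring
    rw [hdiff, mul_assoc]
    exact mul_nonneg (by positivity) (hψ _)

lemma reportProb_wrong_le_right (hψ : ∀ p, 0 ≤ (2 * p - 1) * (2 * ψ p - 1)) :
    θ.prior * (1 - reportProb θ ψ true) + (1 - θ.prior) * reportProb θ ψ false ≤
      θ.prior * reportProb θ ψ true + (1 - θ.prior) * (1 - reportProb θ ψ false) := by
  have hsum :
      ∑ s, (θ.prior * θ.nu1 s - (1 - θ.prior) * θ.nu0 s) * (2 * ψ (posterior θ s) - 1) =
      2 * θ.prior * reportProb θ ψ true - θ.prior * ∑ s, θ.nu1 s -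
        (2 * (1 - θ.prior) * reportProb θ ψ false - (1 - θ.prior) * ∑ s, θ.nu0 s) := by
    simp only [reportProb, Bool.false_eq_true, if_true, if_false, mul_sum, ← sum_sub_distrib]
    exact sum_congr rfl fun s _ => by ring
  rw [θ.nu0_sum, θ.nu1_sum] at hsum
  linarith [sum_nonneg fun s (_ : s ∈ univ) => θ.joint_sub_mul_response_nonneg hψ s]

end SignalStructure

section Regret

variable {n : ℕ}

lemma U_optAgg (r : Bool → (Fin n → Bool) → ℝ) :
    U n (optAgg n r) r =
      ∑ x ∈ range (n + 1), |jointProb n r true x - jointProb n r false x| := by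
  refine sum_congr rfl fun x _ => ?_
  rw [optAgg]
  rcases lt_trichotomy (jointProb n r false x) (jointProb n r true x) with h | h | h
  · rw [if_pos h, abs_of_pos (sub_pos.2 h)]; ring
  · rw [if_neg h.not_lt, if_pos h.symm, h, sub_self, abs_zero, mul_zero]
  · rw [if_neg (lt_asymm h), if_neg h.ne, abs_of_neg (sub_neg.2 h)]; ring

lemma neg_sum_abs_le_U {f : ℕ → ℝ} (hf : IsAggregator f)
    (r : Bool → (Fin n → Bool) → ℝ) :
    -∑ x ∈ range (n + 1), |jointProb n r true x - jointProb n r false x| ≤ U n f r := by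
  rw [U, ← sum_neg_distrib]
  refine sum_le_sum fun x _ => ?_
  have h : |2 * f x - 1| ≤ 1 := abs_le.2 ⟨by linarith [(hf x).1], by linarith [(hf x).2]⟩
  calc -|jointProb n r true x - jointProb n r false x|
      ≤ -(|2 * f x - 1| * |jointProb n r true x - jointProb n r false x|) :=
        neg_le_neg (mul_le_of_le_one_left (abs_nonneg _) h)
    _ ≤ (2 * f x - 1) * (jointProb n r true x - jointProb n r false x) := by
        rw [← abs_mul]; exact neg_abs_le _

lemma regret_le_two_mul_sum_abs {f : ℕ → ℝ} (hf : IsAggregator f)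
    (r : Bool → (Fin n → Bool) → ℝ) :
    regret n f r ≤
      2 * ∑ x ∈ range (n + 1), |jointProb n r true x - jointProb n r false x| := by
  rw [regret, U_optAgg]
  linarith [neg_sum_abs_le_U hf r]

/-- `f` with the labels `0` and `1` swapped, both on the reports and on the output. -/
def dualAgg (n : ℕ) (f : ℕ → ℝ) : ℕ → ℝ := fun x => 1 - f (n - x)

lemma sum_range_succ_reflect (g : ℕ → ℝ) :
    ∑ x ∈ range (n + 1), g (n - x) = ∑ x ∈ range (n + 1), g x := by
  simpa using sum_range_reflect g (n + 1)

lemma regret_eq_regret_dualAgg {r r' : Bool → (Fin n → Bool) → ℝ}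
    (h : ∀ w, ∀ x ≤ n, jointProb n r' w x = jointProb n r (!w) (n - x)) (f : ℕ → ℝ) :
    regret n f r' = regret n (dualAgg n f) r := by
  set D := fun x => jointProb n r true x - jointProb n r false x
  have hD : ∀ x ∈ range (n + 1),
      jointProb n r' true x - jointProb n r' false x = -D (n - x) := by
    intro x hx
    have hxn : x ≤ n := Nat.lt_succ_iff.1 (mem_range.1 hx)
    rw [h true x hxn, h false x hxn]
    simp [D]
  have hopt : U n (optAgg n r') r' = U n (optAgg n r) r := by
    rw [U_optAgg, U_optAgg, sum_congr rfl fun x hx => by rw [hD x hx, abs_neg]]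
    exact sum_range_succ_reflect fun x => |D x|
  have hU : U n f r' = U n (dualAgg n f) r := by
    rw [U, U, sum_congr rfl fun x hx => by rw [hD x hx],
      ← sum_range_succ_reflect fun x => (2 * dualAgg n f x - 1) * D x]
    refine sum_congr rfl fun x hx => ?_
    rw [dualAgg, Nat.sub_sub_self (Nat.lt_succ_iff.1 (mem_range.1 hx))]
    ring
  rw [regret, regret, hopt, hU]

end Regret

section ReportStructure

variable {n : ℕ} {μ q0 q1 : ℝ}

lemma sum_jointProb_repOf (w : Bool) :
    ∑ x ∈ range (n + 1), jointProb n (repOf n μ q0 q1) w x = if w then μ else 1 - μ := by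
  have hbinom (q : ℝ) :
      ∑ x ∈ range (n + 1), (n.choose x * q ^ x * (1 - q) ^ (n - x) : ℝ) = 1 := by
    calc _ = (q + (1 - q)) ^ n := by rw [add_pow]; exact sum_congr rfl fun _ _ => by ring
      _ = 1 := by rw [add_sub_cancel, one_pow]
  simp only [jointProb_repOf, ← mul_sum, hbinom, mul_one]

lemma sum_abs_jointProb_repOf_sub_le_one (hμ : μ ∈ Set.Icc 0 1) (hq0 : q0 ∈ Set.Icc 0 1)
    (hq1 : q1 ∈ Set.Icc 0 1) :
    ∑ x ∈ range (n + 1),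
      |jointProb n (repOf n μ q0 q1) true x - jointProb n (repOf n μ q0 q1) false x| ≤ 1 := by
  have hnonneg : ∀ w x, 0 ≤ jointProb n (repOf n μ q0 q1) w x := by
    intro w x
    have hweight : 0 ≤ (if w then μ else 1 - μ) := by
      cases w <;> simp [hμ.1, hμ.2]
    have hq : (if w then q1 else q0) ∈ Set.Icc 0 1 := by cases w <;> assumption
    have hq' : 0 ≤ 1 - (if w then q1 else q0) := sub_nonneg.2 hq.2
    have := hq.1
    rw [jointProb_repOf]
    positivity
  calc _ ≤ ∑ x ∈ range (n + 1),
        (jointProb n (repOf n μ q0 q1) true x + jointProb n (repOf n μ q0 q1) false x) :=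
        sum_le_sum fun x _ => (abs_sub _ _).trans_eq
          (by rw [abs_of_nonneg (hnonneg _ _), abs_of_nonneg (hnonneg _ _)])
    _ = 1 := by
        rw [sum_add_distrib, sum_jointProb_repOf, sum_jointProb_repOf]
        simp

lemma regret_repOf_le_two {f : ℕ → ℝ} (hf : IsAggregator f) (hμ : μ ∈ Set.Icc 0 1)
    (hq0 : q0 ∈ Set.Icc 0 1) (hq1 : q1 ∈ Set.Icc 0 1) :
    regret n f (repOf n μ q0 q1) ≤ 2 := by
  linarith [regret_le_two_mul_sum_abs hf (repOf n μ q0 q1),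
    sum_abs_jointProb_repOf_sub_le_one (n := n) hμ hq0 hq1]

lemma jointProb_repOf_one_sub {q0' q1' : ℝ} (hq0 : μ ≠ 0 → q0' = 1 - q1)
    (hq1 : 1 - μ ≠ 0 → q1' = 1 - q0) (w : Bool) {x : ℕ} (hx : x ≤ n) :
    jointProb n (repOf n (1 - μ) q0' q1') w x = jointProb n (repOf n μ q0 q1) (!w) (n - x) := by
  simp only [jointProb_repOf, Nat.choose_symm hx, Nat.sub_sub_self hx]
  cases w <;> simp only [Bool.not_false, Bool.not_true, Bool.false_eq_true, if_true, if_false]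
  · rcases eq_or_ne μ 0 with h | h
    · rw [h]; ring
    · rw [hq0 h, sub_sub_cancel]; ring
  · rcases eq_or_ne (1 - μ) 0 with h | h
    · rw [h]; ring
    · rw [hq1 h, sub_sub_cancel]; ring

lemma two_mul_regret_fmaj_le (hn : n = 1 ∨ n = 2) {f : ℕ → ℝ} (hf : IsAggregator f)
    (hacc : μ * (1 - q1) + (1 - μ) * q0 ≤ μ * q1 + (1 - μ) * (1 - q0)) :
    2 * regret n (fmaj n) (repOf n μ q0 q1) ≤
      regret n f (repOf n μ q0 q1) + regret n (dualAgg n f) (repOf n μ q0 q1) := by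
  have hcoef : 0 ≤ 1 + f 0 - f n := by linarith [(hf 0).1, (hf n).2]
  have key := mul_nonneg hcoef (sub_nonneg.2 hacc)
  rcases hn with rfl | rfl <;>
  · simp only [regret, U, sum_range_succ, sum_range_zero, jointProb_repOf, fmaj, dualAgg]
    norm_num
    nlinarith

lemma fmaj_isAggregator (n : ℕ) : IsAggregator (fmaj n) := by
  intro x
  rw [fmaj]
  split_ifs <;> norm_num

section SignalReports

variable {n : ℕ}

lemma regret_rep_flip (θ : SignalStructure) {ψ : ℝ → ℝ} (hψ : ∀ p, ψ (1 - p) = 1 - ψ p)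
    (f : ℕ → ℝ) : regret n f (rep n θ.flip ψ) = regret n (dualAgg n f) (rep n θ ψ) :=
  regret_eq_regret_dualAgg (fun w _ hx => jointProb_repOf_one_sub
    (θ.reportProb_flip hψ true) (θ.reportProb_flip hψ false) w hx) f

lemma regret_rep_le_two (θ : SignalStructure) {ψ : ℝ → ℝ}
    (hψ : ∀ p, ψ p ∈ Set.Icc 0 1) {f : ℕ → ℝ} (hf : IsAggregator f) :
    regret n f (rep n θ ψ) ≤ 2 := by
  have hq (w : Bool) : reportProb θ ψ w ∈ Set.Icc 0 1 :=
    ⟨θ.reportProb_nonneg (fun p => (hψ p).1) w, θ.reportProb_le_one (fun p => (hψ p).2) w⟩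
  exact regret_repOf_le_two hf ⟨θ.prior_nonneg, θ.prior_le_one⟩ (hq false) (hq true)

variable {lam : ℝ} {f : ℕ → ℝ}

lemma bddAbove_regret (hf : IsAggregator f) :
    BddAbove {t : ℝ | ∃ r ∈ repSet n lam, t = regret n f r} := by
  refine ⟨2, ?_⟩
  rintro t ⟨r, ⟨θ, rfl⟩, rfl⟩
  exact regret_rep_le_two θ (fun p => ⟨psi_nonneg lam p, psi_le_one lam p⟩) hf

lemma regret_le_worstRegret (hf : IsAggregator f) (θ : SignalStructure) :
    regret n f (rep n θ (psi lam)) ≤ worstRegret n lam f :=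
  le_csSup (bddAbove_regret hf) ⟨_, ⟨θ, rfl⟩, rfl⟩

lemma worstRegret_fmaj_le (hn : n = 1 ∨ n = 2) (hlam : 0 ≤ lam) (hf : IsAggregator f) :
    worstRegret n lam (fmaj n) ≤ worstRegret n lam f := by
  refine csSup_le ⟨_, _, ⟨default, rfl⟩, rfl⟩ ?_
  rintro t ⟨r, ⟨θ, rfl⟩, rfl⟩
  have hdom : 2 * regret n (fmaj n) (rep n θ (psi lam)) ≤
      regret n f (rep n θ (psi lam)) + regret n (dualAgg n f) (rep n θ (psi lam)) :=
    two_mul_regret_fmaj_le hn hf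
      (θ.reportProb_wrong_le_right (two_mul_sub_one_mul_psi_nonneg hlam))
  rw [← regret_rep_flip θ (psi_one_sub lam)] at hdom
  linarith [regret_le_worstRegret (n := n) (lam := lam) hf θ,
    regret_le_worstRegret (n := n) (lam := lam) hf θ.flip]

end SignalReports

/-- **Majority voting is optimally robust for one or two experts.** For `n ∈ {1, 2}` and
every finite rationality level `λ > 0`, the worst-case regret of majority voting over all
c.i.i.d.-induced report structures equals the minimax regret over all aggregators. -/
theorem majority_voting_optimal_robust_small (n : ℕ) (hn : n = 1 ∨ n = 2)
    (lam : ℝ) (hlam : 0 < lam) :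
    worstRegret n lam (fmaj n) =
      sInf {t : ℝ | ∃ f : ℕ → ℝ, IsAggregator f ∧ t = worstRegret n lam f} := by
  have hleast : IsLeast {t : ℝ | ∃ f : ℕ → ℝ, IsAggregator f ∧ t = worstRegret n lam f}
      (worstRegret n lam (fmaj n)) := by
    refine ⟨⟨fmaj n, fmaj_isAggregator n, rfl⟩, ?_⟩
    rintro t ⟨f, hf, rfl⟩
    exact worstRegret_fmaj_le hn hlam.le hf
  exact hleast.csInf_eq.symm
end ReportStructure
end

section
/- For every number of experts n ≥ 2 there exist a c.i.i.d. signal structure θ* with finite signal set and a finite rationality level λ* > 0 such that the optimal utility under bounded rationality strictly exceeds that under perfect rationality: max over aggregators f of U(f, rep(θ*, ψ_{λ*})) > max over aggregators f of U(f, rep(θ*, ψ_∞)). -/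
open Real Finset

/-- The fully rational (perfectly rational, `λ → ∞`) response function. -/
noncomputable def psiInf (p : ℝ) : ℝ :=
  if 1 / 2 < p then 1 else if p = 1 / 2 then 1 / 2 else 0


section Aux

lemma sum_prod_bool (n : ℕ) (g : Bool → ℝ) :
    ∑ v : Fin n → Bool, ∏ i, g (v i) = (g false + g true) ^ n := by
  classical
  have h := Finset.sum_pow' (univ : Finset Bool) g n
  rw [Fintype.piFinset_univ] at h
  rw [← h]
  simp [add_comm]

/-- Total mass over counts equals total mass over report profiles. -/
lemma sum_jointProb (n : ℕ) (r : Bool → (Fin n → Bool) → ℝ) (w : Bool) :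
    ∑ x ∈ Finset.range (n + 1), jointProb n r w x = ∑ v : Fin n → Bool, r w v := by
  classical
  unfold jointProb
  rw [Finset.sum_comm]
  refine Finset.sum_congr rfl fun v _ => ?_
  rw [Finset.sum_ite_eq (Finset.range (n+1)) _ (fun _ => r w v)]
  have : (Finset.univ.filter (fun i => v i = true)).card ∈ Finset.range (n+1) := by
    rw [Finset.mem_range, Nat.lt_succ_iff]
    exact (Finset.card_filter_le _ _).trans (by simp)
  simp [this]

lemma sum_repOf (n : ℕ) (μ q0 q1 : ℝ) (w : Bool) :
    ∑ v : Fin n → Bool, repOf n μ q0 q1 w v = (if w then μ else 1 - μ) := by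
  classical
  unfold repOf
  rw [← Finset.mul_sum]
  set q : ℝ := if w then q1 else q0 with hq
  have := sum_prod_bool n (fun b => if b then q else 1 - q)
  rw [this]
  simp

lemma jointProb_top (n : ℕ) (μ q0 q1 : ℝ) (w : Bool) :
    jointProb n (repOf n μ q0 q1) w n
      = (if w then μ else 1 - μ) * (if w then q1 else q0) ^ n := by
  classical
  unfold jointProb
  rw [Finset.sum_eq_single (fun _ : Fin n => true)]
  · simp [repOf, Finset.prod_const]
  · intro v _ hv
    have : (Finset.univ.filter (fun i => v i = true)).card ≠ n := by
      intro hc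
      apply hv
      have huniv : (Finset.univ.filter (fun i => v i = true)) = Finset.univ := by
        apply Finset.eq_univ_of_card
        simpa using hc
      funext i
      have hi : i ∈ Finset.univ.filter (fun i => v i = true) := by
        rw [huniv]; exact Finset.mem_univ i
      simpa using hi
    simp [this]
  · intro h
    exact absurd (Finset.mem_univ _) h

lemma jointProb_zero_rep (n : ℕ) (μ : ℝ) (w : Bool) (x : ℕ) :
    jointProb n (repOf n μ 0 0) w x
      = (if w then μ else 1 - μ) * (if 0 = x then 1 else 0) := by
  classical
  unfold jointProb
  rw [Finset.sum_eq_single (fun _ : Fin n => false)]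
  · simp [repOf]
  · intro v _ hv
    have : repOf n μ 0 0 w v = 0 := by
      unfold repOf
      have : ∃ i, v i = true := by
        by_contra h
        push_neg at h
        exact hv (funext fun i => by simpa using h i)
      obtain ⟨i, hi⟩ := this
      have : (∏ j, (if v j then (if w then (0:ℝ) else 0) else 1 - (if w then (0:ℝ) else 0))) = 0 := by
        apply Finset.prod_eq_zero (Finset.mem_univ i)
        simp [hi]
      rw [this, mul_zero]
    simp [this]
  · intro h
    exact absurd (Finset.mem_univ _) h

lemma jointProb_nonneg (n : ℕ) (μ q0 q1 : ℝ)
    (hμ0 : 0 ≤ μ) (hμ1 : μ ≤ 1) (h00 : 0 ≤ q0) (h01 : q0 ≤ 1) (h10 : 0 ≤ q1) (h11 : q1 ≤ 1)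
    (w : Bool) (x : ℕ) :
    0 ≤ jointProb n (repOf n μ q0 q1) w x := by
  classical
  unfold jointProb
  apply Finset.sum_nonneg
  intro v _
  have hr : 0 ≤ repOf n μ q0 q1 w v := by
    unfold repOf
    apply mul_nonneg
    · cases w <;> simp <;> linarith
    · apply Finset.prod_nonneg
      intro i _
      cases w <;> cases hvi : v i <;> simp <;> linarith
  split <;> simp [hr]

lemma U_le_one (n : ℕ) (f : ℕ → ℝ) (hf : IsAggregator f) (μ q0 q1 : ℝ)
    (hμ0 : 0 ≤ μ) (hμ1 : μ ≤ 1) (h00 : 0 ≤ q0) (h01 : q0 ≤ 1) (h10 : 0 ≤ q1) (h11 : q1 ≤ 1) :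
    U n f (repOf n μ q0 q1) ≤ 1 := by
  classical
  unfold U
  have hle : ∀ x ∈ Finset.range (n+1),
      (2 * f x - 1) * (jointProb n (repOf n μ q0 q1) true x - jointProb n (repOf n μ q0 q1) false x)
        ≤ jointProb n (repOf n μ q0 q1) true x + jointProb n (repOf n μ q0 q1) false x := by
    intro x _
    have h1 := jointProb_nonneg n μ q0 q1 hμ0 hμ1 h00 h01 h10 h11 true x
    have h0 := jointProb_nonneg n μ q0 q1 hμ0 hμ1 h00 h01 h10 h11 false x
    have hfx := hf x
    nlinarith [hfx.1, hfx.2]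
  calc ∑ x ∈ Finset.range (n+1), (2 * f x - 1) *
        (jointProb n (repOf n μ q0 q1) true x - jointProb n (repOf n μ q0 q1) false x)
      ≤ ∑ x ∈ Finset.range (n+1), (jointProb n (repOf n μ q0 q1) true x
          + jointProb n (repOf n μ q0 q1) false x) := Finset.sum_le_sum hle
    _ = 1 := by
        rw [Finset.sum_add_distrib, sum_jointProb, sum_jointProb, sum_repOf, sum_repOf]
        simp

end Aux


section Construction

/-- The signal structure: prior 1/4, signal 0 has likelihood ratio 2 (posterior 2/5),
signal 1 is impossible under state 1 (posterior 0). All posteriors are below 1/2. -/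
noncomputable def thetaStar : SignalStructure where
  k := 2
  prior := 1/4
  nu0 := ![1/2, 1/2]
  nu1 := ![1, 0]
  prior_nonneg := by norm_num
  prior_le_one := by norm_num
  nu0_nonneg := fun s => by fin_cases s <;> norm_num
  nu1_nonneg := fun s => by fin_cases s <;> norm_num
  nu0_sum := by rw [Fin.sum_univ_two]; norm_num
  nu1_sum := by rw [Fin.sum_univ_two]; norm_num

noncomputable def aVal : ℝ := 1 / (1 + Real.exp 2)
noncomputable def bVal : ℝ := 1 / (1 + Real.exp 10)

lemma posterior_thetaStar_zero : posterior thetaStar (0 : Fin 2) = 2/5 := by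
  unfold posterior thetaStar
  norm_num

lemma posterior_thetaStar_one : posterior thetaStar (1 : Fin 2) = 0 := by
  unfold posterior thetaStar
  norm_num

lemma reportProb_eval (ψ : ℝ → ℝ) (w : Bool) :
    reportProb thetaStar ψ w =
      (if w then (1:ℝ) else 1/2) * ψ (2/5) + (if w then 0 else 1/2) * ψ 0 := by
  show (Finset.univ : Finset (Fin 2)).sum
      (fun s => (if w then thetaStar.nu1 s else thetaStar.nu0 s) * ψ (posterior thetaStar s)) = _
  rw [Fin.sum_univ_two, posterior_thetaStar_zero, posterior_thetaStar_one]
  cases w <;> simp [thetaStar]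

lemma psi5_eval1 : psi 5 (2/5) = aVal := by
  unfold psi aVal
  norm_num

lemma psi5_eval2 : psi 5 0 = bVal := by
  unfold psi bVal
  norm_num

lemma reportProb_psi5_true : reportProb thetaStar (psi 5) true = aVal := by
  rw [reportProb_eval, psi5_eval1, psi5_eval2]
  norm_num

lemma reportProb_psi5_false :
    reportProb thetaStar (psi 5) false = (aVal + bVal) / 2 := by
  rw [reportProb_eval, psi5_eval1, psi5_eval2]
  norm_num
  ring

lemma psiInf_lt_half {p : ℝ} (hp : p < 1/2) : psiInf p = 0 := by
  unfold psiInf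
  rw [if_neg (by linarith), if_neg (by linarith)]

lemma reportProb_psiInf (w : Bool) : reportProb thetaStar psiInf w = 0 := by
  rw [reportProb_eval, psiInf_lt_half (by norm_num : (2:ℝ)/5 < 1/2),
    psiInf_lt_half (by norm_num : (0:ℝ) < 1/2)]
  ring

lemma rep_psi5 (n : ℕ) :
    rep n thetaStar (psi 5) = repOf n (1/4) ((aVal + bVal) / 2) aVal := by
  unfold rep
  rw [reportProb_psi5_true, reportProb_psi5_false]
  rfl

lemma rep_psiInf (n : ℕ) : rep n thetaStar psiInf = repOf n (1/4) 0 0 := by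
  unfold rep
  rw [reportProb_psiInf, reportProb_psiInf]
  rfl

lemma exp2_bounds : 7 < Real.exp 2 ∧ Real.exp 2 < 8 := by
  have h1 := Real.exp_one_gt_d9
  have h2 := Real.exp_one_lt_d9
  have : Real.exp 2 = Real.exp 1 * Real.exp 1 := by
    rw [← Real.exp_add]; norm_num
  constructor <;> nlinarith

lemma exp10_big : 16807 < Real.exp 10 := by
  have h : Real.exp 10 = Real.exp 2 ^ 5 := by
    rw [← Real.exp_nat_mul]; norm_num
  have h7 := exp2_bounds.1
  rw [h]
  calc (16807:ℝ) = 7^5 := by norm_num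
    _ < Real.exp 2 ^ 5 := by
        apply pow_lt_pow_left₀ h7 (by norm_num)
        norm_num

lemma aVal_pos : 0 < aVal := by
  unfold aVal
  positivity

lemma aVal_lt_one : aVal < 1 := by
  unfold aVal
  rw [div_lt_one (by positivity)]
  have := Real.exp_pos 2
  linarith

lemma bVal_pos : 0 < bVal := by
  unfold bVal
  positivity

lemma b_small : 1000 * bVal < aVal := by
  unfold aVal bVal
  have h2 := exp2_bounds.2
  have h10 := exp10_big
  have hp2 : (0:ℝ) < 1 + Real.exp 2 := by positivity
  have hp10 : (0:ℝ) < 1 + Real.exp 10 := by positivity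
  rw [mul_one_div, div_lt_div_iff₀ hp10 hp2]
  nlinarith

lemma key_ineq (n : ℕ) (hn : 2 ≤ n) :
    3 * ((aVal + bVal) / 2) ^ n < aVal ^ n := by
  set a := aVal
  set b := bVal
  set c : ℝ := (a + b) / 2 with hc
  have ha : 0 < a := aVal_pos
  have hb : 0 < b := bVal_pos
  have hba : 1000 * b < a := b_small
  have hc0 : 0 < c := by rw [hc]; positivity
  have hca : c < a := by rw [hc]; linarith
  have hsq : 3 * c ^ 2 < a ^ 2 := by
    rw [hc]
    nlinarith
  have hm : n - 2 + 2 = n := Nat.sub_add_cancel hn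
  have hpowa : a ^ n = a ^ (n - 2) * a ^ 2 := by rw [← pow_add, hm]
  have hpowc : c ^ n = c ^ (n - 2) * c ^ 2 := by rw [← pow_add, hm]
  have hle : c ^ (n - 2) ≤ a ^ (n - 2) := pow_le_pow_left₀ hc0.le hca.le _
  have hcp : (0:ℝ) < c ^ (n - 2) := pow_pos hc0 _
  have hap : (0:ℝ) < a ^ (n - 2) := pow_pos ha _
  rw [hpowa, hpowc]
  calc 3 * (c ^ (n - 2) * c ^ 2) = c ^ (n - 2) * (3 * c ^ 2) := by ring
    _ ≤ a ^ (n - 2) * (3 * c ^ 2) := by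
        apply mul_le_mul_of_nonneg_right hle
        positivity
    _ < a ^ (n - 2) * a ^ 2 := by
        exact mul_lt_mul_of_pos_left hsq hap

end Construction

/-- **Bounded rationality advantage.** For every number of experts `n ≥ 2` there exist a
c.i.i.d. signal structure `θ*` (with finite signal set) and a finite rationality level
`λ* > 0` such that the optimal utility achievable by aggregating the bounded-rational
reports `rep(θ*, ψ_{λ*})` strictly exceeds the optimal utility achievable by aggregating
the perfectly rational reports `rep(θ*, ψ_∞)`. -/

theorem bounded_rationality_advantage (n : ℕ) (hn : 2 ≤ n) :
    ∃ (θ : SignalStructure) (lam : ℝ), 0 < lam ∧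
      sSup {t : ℝ | ∃ f : ℕ → ℝ, IsAggregator f ∧ t = U n f (rep n θ (psi lam))} >
        sSup {t : ℝ | ∃ f : ℕ → ℝ, IsAggregator f ∧ t = U n f (rep n θ psiInf)} := by
  classical
  refine ⟨thetaStar, 5, by norm_num, ?_⟩
  have ha0 : 0 < aVal := aVal_pos
  have ha1 : aVal < 1 := aVal_lt_one
  have hb0 : 0 < bVal := bVal_pos
  have hba : bVal < aVal := by have := b_small; linarith
  set c : ℝ := (aVal + bVal) / 2 with hcc
  have hc0 : 0 < c := by rw [hcc]; linarith
  have hc1 : c < 1 := by rw [hcc]; linarith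
  -- The perfectly rational side is at most 1/2.
  have hRHS : sSup {t : ℝ | ∃ f : ℕ → ℝ, IsAggregator f ∧ t = U n f (rep n thetaStar psiInf)}
      ≤ 1/2 := by
    apply Real.sSup_le _ (by norm_num)
    rintro t ⟨f, hf, rfl⟩
    rw [rep_psiInf]
    unfold U
    have hD : ∀ x : ℕ, jointProb n (repOf n (1/4 : ℝ) 0 0) true x
        - jointProb n (repOf n (1/4 : ℝ) 0 0) false x = if 0 = x then -(1/2) else 0 := by
      intro x
      rw [jointProb_zero_rep, jointProb_zero_rep]
      by_cases h : 0 = x <;> simp [h] <;> norm_num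
    have hstep : ∑ x ∈ Finset.range (n+1), (2 * f x - 1) *
          (jointProb n (repOf n (1/4 : ℝ) 0 0) true x
            - jointProb n (repOf n (1/4 : ℝ) 0 0) false x)
        = ∑ x ∈ Finset.range (n+1), (if 0 = x then (2 * f x - 1) * (-(1/2)) else 0) := by
      refine Finset.sum_congr rfl fun x _ => ?_
      rw [hD x]
      split <;> ring
    rw [hstep, Finset.sum_ite_eq (Finset.range (n+1)) 0 (fun x => (2 * f x - 1) * (-(1/2)))]
    have h0mem : (0 : ℕ) ∈ Finset.range (n+1) := by
      rw [Finset.mem_range]; omega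
    rw [if_pos h0mem]
    have := (hf 0).1
    linarith
  -- The bounded-rational side.
  have hrepeq := rep_psi5 n
  have hbdd : BddAbove {t : ℝ | ∃ f : ℕ → ℝ, IsAggregator f ∧
      t = U n f (rep n thetaStar (psi 5))} := by
    refine ⟨1, ?_⟩
    rintro t ⟨f, hf, rfl⟩
    rw [hrepeq]
    exact U_le_one n f hf (1/4) c aVal (by norm_num) (by norm_num)
      hc0.le hc1.le ha0.le ha1.le
  set fstar : ℕ → ℝ := fun x => if x = n then 1 else 0 with hfs
  have hfagg : IsAggregator fstar := by
    intro x
    by_cases h : x = n <;> simp [hfs, h]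
  have hval : U n fstar (rep n thetaStar (psi 5))
      = 2 * ((1/4) * aVal ^ n - (3/4) * c ^ n) + 1/2 := by
    rw [hrepeq]
    unfold U
    set r := repOf n (1/4 : ℝ) c aVal  with hr
    have hstep : ∀ x ∈ Finset.range (n+1), (2 * fstar x - 1) *
          (jointProb n r true x - jointProb n r false x)
        = (if x = n then 2 * (jointProb n r true x - jointProb n r false x) else 0)
          - (jointProb n r true x - jointProb n r false x) := by
      intro x _
      rw [hfs]
      by_cases h : x = n <;> simp [h] <;> ring
    rw [Finset.sum_congr rfl hstep, Finset.sum_sub_distrib]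
    rw [Finset.sum_ite_eq' (Finset.range (n+1)) n
      (fun x => 2 * (jointProb n r true x - jointProb n r false x))]
    have hnmem : n ∈ Finset.range (n+1) := by rw [Finset.mem_range]; omega
    rw [if_pos hnmem]
    have hsub : ∑ x ∈ Finset.range (n+1),
        (jointProb n r true x - jointProb n r false x) = 1/4 - 3/4 := by
      rw [Finset.sum_sub_distrib, sum_jointProb, sum_jointProb, hr, sum_repOf, sum_repOf]
      norm_num
    have htop1 : jointProb n r true n = (1/4 : ℝ) * aVal ^ n := by
      rw [hr, jointProb_top]; norm_num
    have htop0 : jointProb n r false n = (3/4 : ℝ) * c ^ n := by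
      rw [hr, jointProb_top]; norm_num
    rw [hsub, htop1, htop0]
    ring
  have hkey : 3 * c ^ n < aVal ^ n := by
    rw [hcc]; exact key_ineq n hn
  have hgt : 1/2 < U n fstar (rep n thetaStar (psi 5)) := by
    rw [hval]
    nlinarith
  have hmem : U n fstar (rep n thetaStar (psi 5)) ∈
      {t : ℝ | ∃ f : ℕ → ℝ, IsAggregator f ∧ t = U n f (rep n thetaStar (psi 5))} :=
    ⟨fstar, hfagg, rfl⟩
  have hLHS := le_csSup hbdd hmem
  linarith
end

section
/- No four points of the quantal-response curve are coplanar: for every λ > 0 and all reals 0 ≤ a < b < c < d ≤ 1, the determinant of the 4×4 matrix whose rows are (1, s, ψ_λ(s), s·ψ_λ(s)) for s = a, b, c, d (in this order) is strictly positive. In particular, the four points v(a), v(b), v(c), v(d) on the curve C = {(s, ψ_λ(s), s·ψ_λ(s)) : s ∈ [0,1]} do not lie in a common plane of ℝ³. -/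
/-!
With `u = λ(2s − 1)` one has `ψ_λ(s) = (1 + tanh u) / 2`, so `ψ(x) − ψ(y)` is
`sinh (2λ(x − y))` times a positive factor that splits as a product of a function of `x` and
one of `y`. The determinant equals
`(b − a)(d − c)(ψa − ψd)(ψb − ψc) − (c − b)(d − a)(ψa − ψb)(ψc − ψd)`, those factors pull
out, and for the scaled gaps `x, y, z` positivity becomes
`y(x + y + z) sinh x sinh z < x z sinh (x + y + z) sinh y`, i.e. `φ x φ z < φ y φ (x + y + z)`
for `φ t = sinh t / t`. This follows from `φ x φ z ≤ φ (x + z)` (a consequence of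
`tanh t ≤ t`), monotonicity of `φ`, and `φ y > 1`.
-/

open Real

/-- The curve point `v(s) = (s, ψ_λ(s), s·ψ_λ(s)) ∈ ℝ³`. -/
noncomputable def vpoint (lam s : ℝ) : ℝ × ℝ × ℝ := (s, psi lam s, s * psi lam s)

open Set

namespace Real

lemma sinh_le_mul_cosh {t : ℝ} (ht : 0 ≤ t) : sinh t ≤ t * cosh t := by
  have hmono : MonotoneOn (fun u ↦ u * cosh u - sinh u) (Ici 0) := by
    refine monotoneOn_of_hasDerivWithinAt_nonneg (f' := fun u ↦ u * sinh u) (convex_Ici 0)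
      (by fun_prop) (fun u _ ↦ ?_) (fun u hu ↦ ?_)
    · exact (((hasDerivAt_id u).mul (hasDerivAt_cosh u)).sub (hasDerivAt_sinh u)
        |>.congr_deriv (by simp)).hasDerivWithinAt
    · rw [interior_Ici] at hu
      exact mul_nonneg hu.le (sinh_pos_iff.2 hu).le
  simpa using hmono self_mem_Ici ht ht

lemma monotoneOn_sinh_div_self : MonotoneOn (fun t ↦ sinh t / t) (Ioi 0) := by
  refine monotoneOn_of_hasDerivWithinAt_nonneg
    (f' := fun u ↦ (cosh u * u - sinh u * 1) / u ^ 2) (convex_Ioi 0)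
    (fun u hu ↦ by fun_prop (disch := exact hu.ne')) (fun u hu ↦ ?_) (fun u hu ↦ ?_)
    <;> rw [interior_Ioi] at hu
  · exact ((hasDerivAt_sinh u).div (hasDerivAt_id u) hu.ne').hasDerivWithinAt
  · have := sinh_le_mul_cosh hu.le
    exact div_nonneg (by linarith) (sq_nonneg u)

lemma add_mul_sinh_mul_sinh_le {x z : ℝ} (hx : 0 ≤ x) (hz : 0 ≤ z) :
    (x + z) * sinh x * sinh z ≤ x * z * sinh (x + z) := by
  have hcx := sinh_le_mul_cosh hx
  have hcz := sinh_le_mul_cosh hz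
  have hsx := sinh_nonneg_iff.2 hx
  have hsz := sinh_nonneg_iff.2 hz
  rw [sinh_add]
  nlinarith [mul_le_mul_of_nonneg_left hcz (mul_nonneg hx hsx),
    mul_le_mul_of_nonneg_left hcx (mul_nonneg hz hsz)]

lemma mul_add_mul_sinh_mul_sinh_lt {x y z : ℝ} (hx : 0 < x) (hy : 0 < y) (hz : 0 < z) :
    y * (x + y + z) * sinh x * sinh z < x * z * sinh (x + y + z) * sinh y := by
  have hxz : 0 < x + z := by positivity
  have hmono : (x + y + z) * sinh (x + z) ≤ (x + z) * sinh (x + y + z) := by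
    have := monotoneOn_sinh_div_self (mem_Ioi.2 hxz) (mem_Ioi.2 (by positivity : 0 < x + y + z))
      (by linarith)
    rw [div_le_div_iff₀ hxz (by positivity)] at this
    linarith
  refine lt_of_mul_lt_mul_left ?_ hxz.le
  calc (x + z) * (y * (x + y + z) * sinh x * sinh z)
      = y * (x + y + z) * ((x + z) * sinh x * sinh z) := by ring
    _ ≤ y * (x + y + z) * (x * z * sinh (x + z)) :=
        mul_le_mul_of_nonneg_left (add_mul_sinh_mul_sinh_le hx.le hz.le) (by positivity)
    _ = x * y * z * ((x + y + z) * sinh (x + z)) := by ring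
    _ ≤ x * y * z * ((x + z) * sinh (x + y + z)) := by gcongr
    _ = (x + z) * (x * z * sinh (x + y + z)) * y := by ring
    _ < (x + z) * (x * z * sinh (x + y + z)) * sinh y := by
        have := sinh_pos_iff.2 (by positivity : 0 < x + y + z)
        gcongr
        exact self_lt_sinh_iff.2 hy
    _ = (x + z) * (x * z * sinh (x + y + z) * sinh y) := by ring

lemma tanh_sub_tanh (u v : ℝ) : tanh u - tanh v = sinh (u - v) / (cosh u * cosh v) := by
  have := (cosh_pos u).ne'
  have := (cosh_pos v).ne'
  rw [tanh_eq_sinh_div_cosh, tanh_eq_sinh_div_cosh, sinh_sub]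
  field_simp

end Real

lemma det_bilinearMonomials (a b c d p q r s : ℝ) :
    Matrix.det !![1, a, p, a * p;
                  1, b, q, b * q;
                  1, c, r, c * r;
                  1, d, s, d * s]
      = (b - a) * (d - c) * (p - s) * (q - r) - (c - b) * (d - a) * (p - q) * (r - s) := by
  simp [Matrix.det_succ_row_zero, Fin.sum_univ_succ, Fin.succAbove]
  ring

lemma det_bilinearMonomials_pos {f w : ℝ → ℝ} {k C : ℝ} (hk : 0 < k) (hC : 0 < C)
    (hw : ∀ s, 0 < w s) (hf : ∀ x y, f x - f y = C * sinh (k * (x - y)) / (w x * w y))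
    {a b c d : ℝ} (hab : a < b) (hbc : b < c) (hcd : c < d) :
    0 < Matrix.det !![1, a, f a, a * f a;
                      1, b, f b, b * f b;
                      1, c, f c, c * f c;
                      1, d, f d, d * f d] := by
  have key := mul_add_mul_sinh_mul_sinh_lt (mul_pos hk (sub_pos.2 hab))
    (mul_pos hk (sub_pos.2 hbc)) (mul_pos hk (sub_pos.2 hcd))
  rw [show k * (b - a) + k * (c - b) + k * (d - c) = k * (d - a) by ring] at key
  have hodd : ∀ x y, sinh (k * (x - y)) = -sinh (k * (y - x)) := fun x y ↦ by
    rw [← sinh_neg]; ring_nf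
  have hW : 0 < w a * w b * w c * w d := by
    have := hw a; have := hw b; have := hw c; have := hw d; positivity
  rw [det_bilinearMonomials, hf, hf, hf, hf, hodd a d, hodd b c, hodd a b, hodd c d]
  refine (mul_pos (div_pos (pow_pos hC 2) (mul_pos (pow_pos hk 2) hW)) (sub_pos.2 key)).trans_eq ?_
  have := hk.ne'; have := (hw a).ne'; have := (hw b).ne'; have := (hw c).ne'; have := (hw d).ne'
  field_simp

lemma affineIndependent_of_det_ne_zero (p : Fin 4 → ℝ × ℝ × ℝ)
    (h : (Matrix.of fun i ↦ ![1, (p i).1, (p i).2.1, (p i).2.2]).det ≠ 0) :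
    AffineIndependent ℝ p := by
  have hrows := Matrix.linearIndependent_rows_of_det_ne_zero h
  rw [Fintype.linearIndependent_iff] at hrows
  rw [affineIndependent_iff_of_fintype]
  intro w hw hp
  rw [Finset.weightedVSub_eq_linear_combination _ hw] at hp
  refine hrows w (funext fun j ↦ ?_)
  have h1 := congrArg Prod.fst hp
  have h2 := congrArg (fun v ↦ v.2.1) hp
  have h3 := congrArg (fun v ↦ v.2.2) hp
  simp only [Prod.fst_sum, Prod.snd_sum, Prod.smul_fst, Prod.smul_snd, smul_eq_mul] at h1 h2 h3
  fin_cases j <;> simp [hw, h1, h2, h3]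

lemma psi_eq_tanh (lam p : ℝ) : psi lam p = (1 + tanh (lam * (2 * p - 1))) / 2 := by
  set u := lam * (2 * p - 1)
  have hexp : exp (2 * lam * (1 - 2 * p)) = exp (-u) / exp u := by
    rw [← exp_sub]; congr 1; ring
  have : exp u + exp (-u) ≠ 0 := by positivity
  rw [psi, hexp, tanh_eq_sinh_div_cosh, sinh_eq, cosh_eq]
  field_simp
  ring

lemma psi_sub_psi (lam x y : ℝ) :
    psi lam x - psi lam y
      = 2⁻¹ * sinh (2 * lam * (x - y)) / (cosh (lam * (2 * x - 1)) * cosh (lam * (2 * y - 1))) := by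
  rw [psi_eq_tanh, psi_eq_tanh, ← sub_div, add_sub_add_left_eq_sub, tanh_sub_tanh]
  ring_nf

theorem no_four_points_coplanar_general (lam : ℝ) (hlam : 0 < lam) (a b c d : ℝ)
    (hab : a < b) (hbc : b < c) (hcd : c < d) :
    0 < Matrix.det !![1, a, psi lam a, a * psi lam a;
                      1, b, psi lam b, b * psi lam b;
                      1, c, psi lam c, c * psi lam c;
                      1, d, psi lam d, d * psi lam d] ∧
      AffineIndependent ℝ ![vpoint lam a, vpoint lam b, vpoint lam c, vpoint lam d] := by
  have hdet := det_bilinearMonomials_pos (w := fun s ↦ cosh (lam * (2 * s - 1)))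
    (by positivity : 0 < 2 * lam) (by norm_num : (0 : ℝ) < 2⁻¹) (fun _ ↦ cosh_pos _)
    (psi_sub_psi lam) hab hbc hcd
  refine ⟨hdet, affineIndependent_of_det_ne_zero _ ?_⟩
  convert hdet.ne' using 2
  ext i j
  fin_cases i <;> fin_cases j <;> rfl

/-- **No four points of the quantal-response curve are coplanar.** For every `λ > 0` and
all `0 ≤ a < b < c < d ≤ 1`, the determinant of the 4×4 matrix with rows
`(1, s, ψ_λ(s), s·ψ_λ(s))`, `s = a, b, c, d`, is strictly positive; in particular the
four points `v(a), v(b), v(c), v(d)` do not lie in a common plane of `ℝ³` (they are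
affinely independent). -/
theorem no_four_points_coplanar (lam : ℝ) (hlam : 0 < lam) (a b c d : ℝ)
    (ha : 0 ≤ a) (hab : a < b) (hbc : b < c) (hcd : c < d) (hd : d ≤ 1) :
    0 < Matrix.det !![1, a, psi lam a, a * psi lam a;
                      1, b, psi lam b, b * psi lam b;
                      1, c, psi lam c, c * psi lam c;
                      1, d, psi lam d, d * psi lam d] ∧
      AffineIndependent ℝ ![vpoint lam a, vpoint lam b, vpoint lam c, vpoint lam d] :=
  no_four_points_coplanar_general lam hlam a b c d hab hbc hcd
end

section
/- Logarithmic convexity inequality: for every β > 0 and all u, w > 0, β·u·w·(e^{β(u+w)} − 1) ≥ (u+w)·(e^{βu} − 1)·(e^{βw} − 1). (Equivalently, the function g with g(x) = ln(e^{βx} − 1) − ln x for x > 0 and g(0) = ln β is convex on [0, ∞), so g(u+w) + g(0) ≥ g(u) + g(w).) -/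
/-!
`gfun β` is `log` of the difference quotient `(e^{βx} − 1)/x`, extended by its limit `β` at `0`;
this makes it continuous. Away from `0` its second derivative is
`1/x² − β² e^{βx}/(e^{βx} − 1)²`, which is nonnegative because
`(e^a − 1)² = 4 e^a sinh²(a/2) ≥ a² e^a`. Convexity on `[0, ∞)` gives
`g(u) + g(w) ≤ g(u + w) + g(0)`, and exponentiating this is the product inequality.
-/

open Real

/-- `g(x) = ln(e^{βx} − 1) − ln x` for `x > 0`, with `g(0) = ln β`. -/
noncomputable def gfun (β x : ℝ) : ℝ :=
  if x = 0 then Real.log β else Real.log (Real.exp (β * x) - 1) - Real.log x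

lemma sq_mul_exp_le_sq_exp_sub_one (a : ℝ) : a ^ 2 * exp a ≤ (exp a - 1) ^ 2 := by
  have hsinh : (a / 2) ^ 2 ≤ sinh (a / 2) ^ 2 := by
    rw [sq_le_sq, abs_sinh]
    exact self_le_sinh_iff.2 (abs_nonneg _)
  have hsq : exp (a / 2) * exp (a / 2) = exp a := by rw [← exp_add, add_halves]
  have hinv : exp (a / 2) * exp (-(a / 2)) = 1 := by rw [← exp_add, add_neg_cancel, exp_zero]
  have hfactor : exp a - 1 = 2 * exp (a / 2) * sinh (a / 2) := by
    rw [sinh_eq]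
    linear_combination -hsq + hinv
  calc a ^ 2 * exp a = 4 * (exp (a / 2) * exp (a / 2)) * (a / 2) ^ 2 := by rw [hsq]; ring
    _ ≤ 4 * (exp (a / 2) * exp (a / 2)) * sinh (a / 2) ^ 2 := by gcongr
    _ = (exp a - 1) ^ 2 := by rw [hfactor]; ring

lemma sq_mul_exp_div_sq_exp_sub_one_le_inv_sq (β : ℝ) {x : ℝ} (hx : x ≠ 0) :
    β ^ 2 * exp (β * x) / (exp (β * x) - 1) ^ 2 ≤ (x ^ 2)⁻¹ :=
  calc β ^ 2 * exp (β * x) / (exp (β * x) - 1) ^ 2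
      = (β * x) ^ 2 * exp (β * x) / (exp (β * x) - 1) ^ 2 / x ^ 2 := by field_simp
    _ ≤ (exp (β * x) - 1) ^ 2 / (exp (β * x) - 1) ^ 2 / x ^ 2 := by
      gcongr; exact sq_mul_exp_le_sq_exp_sub_one _
    _ ≤ 1 / x ^ 2 := by gcongr; exact div_self_le_one _
    _ = (x ^ 2)⁻¹ := one_div _

lemma hasDerivAt_exp_mul (β x : ℝ) : HasDerivAt (fun y ↦ exp (β * y)) (β * exp (β * x)) x := by
  simpa [mul_comm] using ((hasDerivAt_id' x).const_mul β).exp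

lemma ConvexOn.map_add_map_le_map_add_add_map_zero {s : Set ℝ} {f : ℝ → ℝ}
    (hf : ConvexOn ℝ s f) (h0 : 0 ∈ s) {u w : ℝ} (hu : 0 ≤ u) (hw : 0 ≤ w) (huw : u + w ∈ s) :
    f u + f w ≤ f (u + w) + f 0 := by
  rcases (add_nonneg hu hw).eq_or_lt with hsum | hsum
  · obtain rfl : u = 0 := by linarith
    obtain rfl : w = 0 := by linarith
    simp
  -- `u` and `w` are the convex combinations of `0` and `u + w` with swapped weights
  have hcomb : ∀ {a b}, 0 ≤ a → 0 ≤ b → a + b = u + w →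
      f a ≤ a / (u + w) * f (u + w) + b / (u + w) * f 0 := by
    intro a b ha hb hab
    have := hf.2 huw h0 (div_nonneg ha hsum.le) (div_nonneg hb hsum.le)
      (by rw [← add_div, hab, div_self hsum.ne'])
    simpa [div_mul_cancel₀ a hsum.ne'] using this
  have hw_le := hcomb hw hu (add_comm w u)
  have hu_le := hcomb hu hw rfl
  have hweights : u / (u + w) + w / (u + w) = 1 := by rw [← add_div, div_self hsum.ne']
  linear_combination hu_le + hw_le + (f (u + w) + f 0) * hweights

lemma gfun_of_ne_zero (β : ℝ) {x : ℝ} (hx : x ≠ 0) :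
    gfun β x = log (exp (β * x) - 1) - log x := if_neg hx

section

variable {β : ℝ}

lemma exp_mul_sub_one_ne_zero (hβ : β ≠ 0) {x : ℝ} (hx : x ≠ 0) : exp (β * x) - 1 ≠ 0 := by
  rw [sub_ne_zero, Ne, exp_eq_one_iff]
  exact mul_ne_zero hβ hx

lemma dslope_exp_mul_ne_zero (hβ : β ≠ 0) (x : ℝ) : dslope (fun y ↦ exp (β * y)) 0 x ≠ 0 := by
  rcases eq_or_ne x 0 with rfl | hx
  · simpa [dslope_same, (hasDerivAt_exp_mul β 0).deriv] using hβ
  · rw [dslope_of_ne _ hx, slope_def_field]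
    simpa using div_ne_zero (exp_mul_sub_one_ne_zero hβ hx) hx

lemma gfun_eq_log_dslope (hβ : β ≠ 0) : gfun β = fun x ↦ log (dslope (fun y ↦ exp (β * y)) 0 x) := by
  funext x
  rcases eq_or_ne x 0 with rfl | hx
  · simp [gfun, dslope_same, (hasDerivAt_exp_mul β 0).deriv]
  · rw [gfun_of_ne_zero β hx, dslope_of_ne _ hx, slope_def_field, mul_zero, exp_zero, sub_zero,
      log_div (exp_mul_sub_one_ne_zero hβ hx) hx]

lemma continuous_gfun (hβ : β ≠ 0) : Continuous (gfun β) := by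
  have hdslope : Continuous (dslope (fun y ↦ exp (β * y)) 0) :=
    continuousOn_univ.1 <| (continuousOn_dslope Filter.univ_mem).2
      ⟨fun y _ ↦ (hasDerivAt_exp_mul β y).continuousAt.continuousWithinAt,
        (hasDerivAt_exp_mul β 0).differentiableAt⟩
  rw [gfun_eq_log_dslope hβ]
  exact hdslope.log (dslope_exp_mul_ne_zero hβ)

lemma hasDerivAt_gfun (hβ : β ≠ 0) {x : ℝ} (hx : x ≠ 0) :
    HasDerivAt (gfun β) (β * exp (β * x) / (exp (β * x) - 1) - x⁻¹) x := by
  have hφ := (((hasDerivAt_exp_mul β x).sub_const 1).log (exp_mul_sub_one_ne_zero hβ hx)).sub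
    (hasDerivAt_log hx)
  refine hφ.congr_of_eventuallyEq ?_
  filter_upwards [eventually_ne_nhds hx] with y hy using gfun_of_ne_zero β hy

lemma hasDerivAt_deriv_gfun (hβ : β ≠ 0) {x : ℝ} (hx : x ≠ 0) :
    HasDerivAt (fun y ↦ β * exp (β * y) / (exp (β * y) - 1) - y⁻¹)
      ((x ^ 2)⁻¹ - β ^ 2 * exp (β * x) / (exp (β * x) - 1) ^ 2) x := by
  have hE := exp_mul_sub_one_ne_zero hβ hx
  have hquot := ((hasDerivAt_exp_mul β x).const_mul β).div
    ((hasDerivAt_exp_mul β x).sub_const 1) hE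
  refine (hquot.sub (hasDerivAt_inv hx)).congr_deriv ?_
  field_simp
  ring

theorem convexOn_gfun (hβ : β ≠ 0) : ConvexOn ℝ (Set.Ici 0) (gfun β) := by
  refine convexOn_of_hasDerivWithinAt2_nonneg (convex_Ici 0) (continuous_gfun hβ).continuousOn
    (f' := fun x ↦ β * exp (β * x) / (exp (β * x) - 1) - x⁻¹)
    (f'' := fun x ↦ (x ^ 2)⁻¹ - β ^ 2 * exp (β * x) / (exp (β * x) - 1) ^ 2) ?_ ?_ ?_ <;>
    rw [interior_Ici] <;> intro x (hx : 0 < x)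
  · exact (hasDerivAt_gfun hβ hx.ne').hasDerivWithinAt
  · exact (hasDerivAt_deriv_gfun hβ hx.ne').hasDerivWithinAt
  · exact sub_nonneg.2 (sq_mul_exp_div_sq_exp_sub_one_le_inv_sq β hx.ne')

lemma gfun_add_le_iff (hβ : 0 < β) {u w : ℝ} (hu : 0 < u) (hw : 0 < w) :
    gfun β u + gfun β w ≤ gfun β (u + w) + gfun β 0 ↔
      (u + w) * (exp (β * u) - 1) * (exp (β * w) - 1) ≤ β * u * w * (exp (β * (u + w)) - 1) := by
  have hnum : ∀ {x}, 0 < x → 0 < exp (β * x) - 1 := fun hx ↦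
    sub_pos.2 (one_lt_exp_iff.2 (mul_pos hβ hx))
  have hpos : ∀ {x}, 0 < x → 0 < (exp (β * x) - 1) / x := fun hx ↦ div_pos (hnum hx) hx
  have hgfun : ∀ {x}, 0 < x → gfun β x = log ((exp (β * x) - 1) / x) := fun hx ↦ by
    rw [gfun_of_ne_zero β hx.ne', log_div (hnum hx).ne' hx.ne']
  have huw := add_pos hu hw
  rw [hgfun hu, hgfun hw, hgfun huw, gfun, if_pos rfl, ← log_mul (hpos hu).ne' (hpos hw).ne',
    ← log_mul (hpos huw).ne' hβ.ne', log_le_log_iff (mul_pos (hpos hu) (hpos hw))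
    (mul_pos (hpos huw) hβ), div_mul_div_comm, div_mul_eq_mul_div,
    div_le_div_iff₀ (mul_pos hu hw) huw]
  constructor <;> intro h <;> linarith

end

/-- **Logarithmic convexity inequality.** For every `β > 0` and all `u, w > 0`,
`β·u·w·(e^{β(u+w)} − 1) ≥ (u+w)·(e^{βu} − 1)·(e^{βw} − 1)`; equivalently, the function
`g` with `g(x) = ln(e^{βx} − 1) − ln x` for `x > 0` and `g(0) = ln β` is convex on
`[0, ∞)`, so `g(u+w) + g(0) ≥ g(u) + g(w)`. -/
theorem log_convexity_inequality (β u w : ℝ) (hβ : 0 < β) (hu : 0 < u) (hw : 0 < w) :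
    β * u * w * (Real.exp (β * (u + w)) - 1) ≥
        (u + w) * (Real.exp (β * u) - 1) * (Real.exp (β * w) - 1) ∧
      ConvexOn ℝ (Set.Ici (0 : ℝ)) (gfun β) ∧
      gfun β (u + w) + gfun β 0 ≥ gfun β u + gfun β w := by
  have hconvex := convexOn_gfun hβ.ne'
  have hsuper : gfun β u + gfun β w ≤ gfun β (u + w) + gfun β 0 :=
    hconvex.map_add_map_le_map_add_add_map_zero Set.self_mem_Ici hu.le hw.le
      (Set.mem_Ici.2 (add_pos hu hw).le)
  exact ⟨(gfun_add_le_iff hβ hu hw).1 hsuper, hconvex, hsuper⟩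
end

section
/- Unique coplanar interpolation point: fix λ > 0 and let v(s) = (s, ψ_λ(s), s·ψ_λ(s)). For all 0 < p_1 < p_2 < 1 and every q ∈ [0,1], there exists a unique p ∈ (0,1) such that the four points q·v(p_1) + (1−q)·v(p_2), v(p), v(0), v(1) lie in a common plane of ℝ³, and this p satisfies p ∈ [p_1, p_2]. -/
/-!
The four points are coplanar iff `h(p) = 0`, where `h(s) = n · (v(s) − w)`,
`w = q·v(p₁) + (1−q)·v(p₂)` and `n = (v(0) − w) × (v(1) − w)`. As `h` is the restriction to the
curve of an affine function vanishing at `w`, `q·h(p₁) + (1−q)·h(p₂) = 0`, and the intermediate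
value theorem gives a zero in `[p₁, p₂]`. For uniqueness, `h(s) = α s + β ψ(s) + γ s ψ(s) + δ`
vanishes at `0` and `1`, so two zeros in `(0,1)` would give four zeros of
`(α s + δ)(1 + exp(2λ(1−2s))) + β + γ s`. Its second derivative is `exp(2λ(1−2s))` times an affine
function, so Rolle's theorem forces all coefficients to vanish; but
`β = n₁ = q p₁ (ψ(1) − ψ(p₁)) + (1−q) p₂ (ψ(1) − ψ(p₂)) > 0` since `ψ` is increasing.
-/

open Real

open Set Matrix

theorem affineIndependent_iff_det_ne_zero {k V : Type*} [Field k] [AddCommGroup V] [Module k V]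
    {n : ℕ} (e : V ≃ₗ[k] (Fin n → k)) (P : Fin (n + 1) → V) :
    AffineIndependent k P ↔ (Matrix.of fun i => e (P i.succ - P 0)).det ≠ 0 := by
  rw [affineIndependent_iff_linearIndependent_vsub k P 0,
    ← linearIndependent_equiv (finSuccAboveEquiv 0),
    ← (e : V →ₗ[k] Fin n → k).linearIndependent_iff e.ker,
    ← isUnit_iff_ne_zero, ← isUnit_iff_isUnit_det, ← linearIndependent_rows_iff_isUnit]
  rfl

def prodEquivFinThree (k : Type*) [Semiring k] : (k × k × k) ≃ₗ[k] (Fin 3 → k) where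
  toFun x := ![x.1, x.2.1, x.2.2]
  invFun v := (v 0, v 1, v 2)
  map_add' x y := by ext i; fin_cases i <;> rfl
  map_smul' c x := by ext i; fin_cases i <;> rfl
  left_inv x := rfl
  right_inv v := by ext i; fin_cases i <;> rfl

@[simp]
theorem prodEquivFinThree_apply {k : Type*} [Semiring k] (x : k × k × k) :
    prodEquivFinThree k x = ![x.1, x.2.1, x.2.2] :=
  rfl

theorem not_affineIndependent_four_iff {k : Type*} [Field k] (P : Fin 4 → k × k × k) :
    ¬ AffineIndependent k P ↔
      prodEquivFinThree k (P 1 - P 0) ⬝ᵥ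
        (prodEquivFinThree k (P 2 - P 0) ⨯₃ prodEquivFinThree k (P 3 - P 0)) = 0 := by
  rw [affineIndependent_iff_det_ne_zero (prodEquivFinThree k), not_not, triple_product_eq_det]
  congr! 2

theorem psi_mul_one_add_exp (lam s : ℝ) : psi lam s * (1 + exp (2 * lam * (1 - 2 * s))) = 1 :=
  one_div_mul_cancel (by positivity)

theorem psi_strictMono {lam : ℝ} (hlam : 0 < lam) : StrictMono (psi lam) := by
  intro s t hst
  unfold psi
  gcongr

theorem continuous_psi (lam : ℝ) : Continuous (psi lam) := by
  unfold psi
  exact continuous_const.div (by fun_prop) fun s => by positivity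

theorem exists_zero_of_convex_comb {f : ℝ → ℝ} {a b q : ℝ} (hab : a ≤ b)
    (hf : ContinuousOn f (Icc a b)) (hq : q ∈ Icc (0 : ℝ) 1)
    (hcomb : q * f a + (1 - q) * f b = 0) : ∃ c ∈ Icc a b, f c = 0 := by
  have h0 : (0 : ℝ) ∈ uIcc (f a) (f b) := by
    rw [← segment_eq_uIcc]
    exact ⟨q, 1 - q, hq.1, sub_nonneg.2 hq.2, by ring, hcomb⟩
  rw [← uIcc_of_le hab] at hf ⊢
  exact intermediate_value_uIcc hf h0

theorem exists_hasDerivAt_eq_zero_of_forall {f f' : ℝ → ℝ} (hf : ∀ x, HasDerivAt f (f' x) x)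
    {a b : ℝ} (hab : a < b) (hfab : f a = f b) : ∃ c ∈ Ioo a b, f' c = 0 :=
  exists_hasDerivAt_eq_zero hab (fun x _ => (hf x).continuousAt.continuousWithinAt) hfab
    fun x _ => hf x

theorem affine_mul_one_add_exp_eq_zero_of_four_zeros {lam α β γ δ t₀ t₁ t₂ t₃ : ℝ}
    (hlam : lam ≠ 0) (h₀₁ : t₀ < t₁) (h₁₂ : t₁ < t₂) (h₂₃ : t₂ < t₃)
    (hzero : ∀ t ∈ ({t₀, t₁, t₂, t₃} : Set ℝ),
      (α * t + δ) * (1 + exp (2 * lam * (1 - 2 * t))) + β + γ * t = 0) :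
    α = 0 ∧ δ = 0 := by
  set E : ℝ → ℝ := fun s => exp (2 * lam * (1 - 2 * s))
  set H : ℝ → ℝ := fun s => (α * s + δ) * (1 + E s) + β + γ * s
  set H' : ℝ → ℝ := fun s => (α - 4 * lam * (α * s + δ)) * E s + α + γ
  set H'' : ℝ → ℝ := fun s => (16 * lam ^ 2 * (α * s + δ) - 8 * lam * α) * E s
  have hlin : ∀ c d s : ℝ, HasDerivAt (fun s => c * s + d) c s := fun c d s => by
    simpa using ((hasDerivAt_id s).const_mul c).add_const d
  have hE : ∀ s, HasDerivAt E (-(4 * lam) * E s) s := fun s =>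
    ((((hasDerivAt_id' s).const_mul 2).const_sub 1).const_mul (2 * lam)).exp.congr_deriv
      (by simp only [E]; ring)
  have hH : ∀ s, HasDerivAt H (H' s) s := fun s =>
    ((((hlin α δ s).mul ((hE s).const_add 1)).add_const β).add
      ((hasDerivAt_id s).const_mul γ)).congr_deriv (by simp only [H']; ring)
  have hH' : ∀ s, HasDerivAt H' (H'' s) s := fun s =>
    (((((hlin (-(4 * lam * α)) (α - 4 * lam * δ) s).mul (hE s)).add_const α).add_const γ)
      |>.congr_deriv (by simp only [H'']; ring)).congr_of_eventuallyEq
      (.of_forall fun x => by simp only [H', Pi.mul_apply]; ring)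
  have hH₀ : H t₀ = 0 := hzero t₀ (by simp)
  have hH₁ : H t₁ = 0 := hzero t₁ (by simp)
  have hH₂ : H t₂ = 0 := hzero t₂ (by simp)
  have hH₃ : H t₃ = 0 := hzero t₃ (by simp)
  obtain ⟨s₁, hs₁, hH's₁⟩ := exists_hasDerivAt_eq_zero_of_forall hH h₀₁ (hH₀.trans hH₁.symm)
  obtain ⟨s₂, hs₂, hH's₂⟩ := exists_hasDerivAt_eq_zero_of_forall hH h₁₂ (hH₁.trans hH₂.symm)
  obtain ⟨s₃, hs₃, hH's₃⟩ := exists_hasDerivAt_eq_zero_of_forall hH h₂₃ (hH₂.trans hH₃.symm)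
  obtain ⟨u₁, hu₁, hH''u₁⟩ :=
    exists_hasDerivAt_eq_zero_of_forall hH' (hs₁.2.trans hs₂.1) (hH's₁.trans hH's₂.symm)
  obtain ⟨u₂, hu₂, hH''u₂⟩ :=
    exists_hasDerivAt_eq_zero_of_forall hH' (hs₂.2.trans hs₃.1) (hH's₂.trans hH's₃.symm)
  -- `H''` is `E` times an affine function of `s`, which vanishes at the two points `u₁ ≠ u₂`.
  have hcoef : ∀ u, H'' u = 0 → 16 * lam ^ 2 * (α * u + δ) - 8 * lam * α = 0 := fun u hu =>
    (mul_eq_zero.1 hu).resolve_right (exp_pos _).ne'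
  have hlam' : 16 * lam ^ 2 ≠ 0 := mul_ne_zero (by norm_num) (pow_ne_zero 2 hlam)
  have hu : u₁ - u₂ ≠ 0 := sub_ne_zero.2 (hu₁.2.trans hu₂.1).ne
  have hα : α = 0 := by
    have h : 16 * lam ^ 2 * (u₁ - u₂) * α = 0 := by
      linear_combination hcoef u₁ hH''u₁ - hcoef u₂ hH''u₂
    exact (mul_eq_zero.1 h).resolve_left (mul_ne_zero hlam' hu)
  refine ⟨hα, (mul_eq_zero.1 (?_ : 16 * lam ^ 2 * δ = 0)).resolve_left hlam'⟩
  linear_combination hcoef u₁ hH''u₁ + (8 * lam - 16 * lam ^ 2 * u₁) * hα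

theorem psi_combination_eq_zero_of_four_zeros {lam α β γ δ t₀ t₁ t₂ t₃ : ℝ} (hlam : lam ≠ 0)
    (h₀₁ : t₀ < t₁) (h₁₂ : t₁ < t₂) (h₂₃ : t₂ < t₃)
    (hzero : ∀ t ∈ ({t₀, t₁, t₂, t₃} : Set ℝ),
      α * t + β * psi lam t + γ * (t * psi lam t) + δ = 0) :
    α = 0 ∧ β = 0 ∧ γ = 0 ∧ δ = 0 := by
  have hcleared : ∀ t ∈ ({t₀, t₁, t₂, t₃} : Set ℝ),
      (α * t + δ) * (1 + exp (2 * lam * (1 - 2 * t))) + β + γ * t = 0 := fun t ht => by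
    linear_combination (1 + exp (2 * lam * (1 - 2 * t))) * hzero t ht
      - (β + γ * t) * psi_mul_one_add_exp lam t
  obtain ⟨rfl, rfl⟩ :=
    affine_mul_one_add_exp_eq_zero_of_four_zeros hlam h₀₁ h₁₂ h₂₃ hcleared
  have hH₀ := hcleared t₀ (by simp)
  have hH₁ := hcleared t₁ (by simp)
  have hγ : γ = 0 := by
    have h : (t₁ - t₀) * γ = 0 := by linear_combination hH₁ - hH₀
    exact (mul_eq_zero.1 h).resolve_left (sub_ne_zero.2 h₀₁.ne')
  refine ⟨rfl, ?_, hγ, rfl⟩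
  linear_combination hH₀ - t₀ * hγ

noncomputable def planeNormal (lam : ℝ) (w : ℝ × ℝ × ℝ) : Fin 3 → ℝ :=
  prodEquivFinThree ℝ (vpoint lam 0 - w) ⨯₃ prodEquivFinThree ℝ (vpoint lam 1 - w)

noncomputable def coplanarDet (lam : ℝ) (w : ℝ × ℝ × ℝ) (s : ℝ) : ℝ :=
  prodEquivFinThree ℝ (vpoint lam s - w) ⬝ᵥ planeNormal lam w

theorem not_affineIndependent_iff_coplanarDet_eq_zero (lam : ℝ) (w : ℝ × ℝ × ℝ) (s : ℝ) :
    ¬ AffineIndependent ℝ ![w, vpoint lam s, vpoint lam 0, vpoint lam 1] ↔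
      coplanarDet lam w s = 0 :=
  not_affineIndependent_four_iff _

theorem coplanarDet_zero (lam : ℝ) (w : ℝ × ℝ × ℝ) : coplanarDet lam w 0 = 0 :=
  dot_self_cross _ _

theorem coplanarDet_one (lam : ℝ) (w : ℝ × ℝ × ℝ) : coplanarDet lam w 1 = 0 :=
  dot_cross_self _ _

theorem coplanarDet_eq (lam : ℝ) (w : ℝ × ℝ × ℝ) (s : ℝ) :
    coplanarDet lam w s = planeNormal lam w 0 * s + planeNormal lam w 1 * psi lam s
      + planeNormal lam w 2 * (s * psi lam s) + -(prodEquivFinThree ℝ w ⬝ᵥ planeNormal lam w) := by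
  simp [coplanarDet, vpoint, dotProduct, Fin.sum_univ_three]
  ring

theorem continuous_coplanarDet (lam : ℝ) (w : ℝ × ℝ × ℝ) : Continuous (coplanarDet lam w) := by
  rw [funext (coplanarDet_eq lam w)]
  have := continuous_psi lam
  fun_prop

theorem coplanarDet_convex_comb (lam p1 p2 q : ℝ) :
    let w := q • vpoint lam p1 + (1 - q) • vpoint lam p2
    q * coplanarDet lam w p1 + (1 - q) * coplanarDet lam w p2 = 0 := by
  simp only [coplanarDet, map_sub, map_add, map_smul, sub_dotProduct, add_dotProduct,
    smul_dotProduct, smul_eq_mul]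
  ring

theorem planeNormal_one_pos {lam p1 p2 q : ℝ} (hlam : 0 < lam) (hp1 : 0 < p1) (hp12 : p1 < p2)
    (hp2 : p2 < 1) (hq : q ∈ Icc (0 : ℝ) 1) :
    0 < planeNormal lam (q • vpoint lam p1 + (1 - q) • vpoint lam p2) 1 := by
  have hA : 0 < p1 * (psi lam 1 - psi lam p1) :=
    mul_pos hp1 (sub_pos.2 (psi_strictMono hlam (hp12.trans hp2)))
  have hB : 0 < p2 * (psi lam 1 - psi lam p2) :=
    mul_pos (hp1.trans hp12) (sub_pos.2 (psi_strictMono hlam hp2))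
  have hn : planeNormal lam (q • vpoint lam p1 + (1 - q) • vpoint lam p2) 1
      = q * (p1 * (psi lam 1 - psi lam p1)) + (1 - q) * (p2 * (psi lam 1 - psi lam p2)) := by
    simp [planeNormal, vpoint, cross_apply]
    ring
  rw [hn]
  nlinarith [mul_nonneg hq.1 hA.le, mul_nonneg (sub_nonneg.2 hq.2) hB.le, mul_pos hA hB]

theorem eq_of_coplanarDet_eq_zero {lam : ℝ} (hlam : lam ≠ 0) {w : ℝ × ℝ × ℝ}
    (hn : planeNormal lam w 1 ≠ 0) {r r' : ℝ} (hr : r ∈ Ioo (0 : ℝ) 1) (hr' : r' ∈ Ioo (0 : ℝ) 1)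
    (h : coplanarDet lam w r = 0) (h' : coplanarDet lam w r' = 0) : r = r' := by
  wlog hlt : r < r' generalizing r r'
  · rcases (not_lt.1 hlt).lt_or_eq with hgt | heq
    · exact (this hr' hr h' h hgt).symm
    · exact heq.symm
  refine absurd (psi_combination_eq_zero_of_four_zeros (α := planeNormal lam w 0)
    (γ := planeNormal lam w 2) (δ := -(prodEquivFinThree ℝ w ⬝ᵥ planeNormal lam w)) hlam hr.1 hlt
    hr'.2 fun t ht => ?_).2.1 hn
  rw [← coplanarDet_eq]
  rcases ht with rfl | rfl | rfl | rfl
  exacts [coplanarDet_zero lam w, h, h', coplanarDet_one lam w]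

/-- **Unique coplanar interpolation point.** Fix `λ > 0`. For all `0 < p₁ < p₂ < 1` and
every `q ∈ [0,1]`, there exists a unique `p ∈ (0,1)` such that the four points
`q·v(p₁) + (1−q)·v(p₂), v(p), v(0), v(1)` are coplanar (affinely dependent), and this
`p` lies in `[p₁, p₂]`. -/
theorem unique_coplanar_interpolation_point (lam : ℝ) (hlam : 0 < lam)
    (p1 p2 : ℝ) (hp1 : 0 < p1) (hp12 : p1 < p2) (hp2 : p2 < 1)
    (q : ℝ) (hq : q ∈ Set.Icc (0 : ℝ) 1) :
    ∃ p : ℝ,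
      (p ∈ Set.Ioo (0 : ℝ) 1 ∧
        ¬ AffineIndependent ℝ
          ![q • vpoint lam p1 + (1 - q) • vpoint lam p2, vpoint lam p,
            vpoint lam 0, vpoint lam 1] ∧
        p ∈ Set.Icc p1 p2) ∧
      ∀ p' : ℝ, p' ∈ Set.Ioo (0 : ℝ) 1 →
        ¬ AffineIndependent ℝ
          ![q • vpoint lam p1 + (1 - q) • vpoint lam p2, vpoint lam p',
            vpoint lam 0, vpoint lam 1] →
        p' = p := by
  set w := q • vpoint lam p1 + (1 - q) • vpoint lam p2
  obtain ⟨p, hp, hp0⟩ := exists_zero_of_convex_comb hp12.le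
    (continuous_coplanarDet lam w).continuousOn hq (coplanarDet_convex_comb lam p1 p2 q)
  have hp_mem : p ∈ Ioo (0 : ℝ) 1 := ⟨hp1.trans_le hp.1, hp.2.trans_lt hp2⟩
  refine ⟨p, ⟨hp_mem, (not_affineIndependent_iff_coplanarDet_eq_zero lam w p).2 hp0, hp⟩,
    fun p' hp' hcop => ?_⟩
  exact eq_of_coplanarDet_eq_zero hlam.ne' (planeNormal_one_pos hlam hp1 hp12 hp2 hq).ne' hp'
    hp_mem ((not_affineIndependent_iff_coplanarDet_eq_zero lam w p').1 hcop) hp0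
end

section
/- Two-point to three-point representation: fix λ > 0 and let v(s) = (s, ψ_λ(s), s·ψ_λ(s)). For all 0 < p_1 < p_2 < 1 and every q ∈ [0,1], there exist p ∈ [0,1] and nonnegative reals x, y, z with x + y + z = 1 such that q·v(p_1) + (1−q)·v(p_2) = x·v(p) + y·v(0) + z·v(1). -/
open Real

open Set MeasureTheory

/-!
Put `K = 4λ` and `E = e^{2λ}`. Then `ψ_λ(s) = e^{Ks} / (e^{Ks} + E)`, so `(e^{Ks} + E) • (1, v(s))`
is a linear image of the moment vector `u(s) = (1, s, e^{Ks}, s e^{Ks})`, and the theorem reduces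
to: every combination `a₁ u(s₁) + a₂ u(s₂)` with `a_i ≥ 0` and `s_i ∈ (0, 1)` is a nonnegative
combination of `u(0), u(p), u(1)` for some `p ∈ [0, 1]`.

For `p ∈ (0, 1)`, the moments of `1`, `s` and `s e^{Ks}` determine the weights at `0, p, 1`. The
weight at `p` is always nonnegative, the weight at `1` is nonnegative as long as `e^{Kp}` is at most
the mean of the `e^{K s_i}` for the weights `a_i s_i`, and the weight at `0` is nonnegative as long
as `e^{Kp}` is at least their mean for the weights `a_i (1 - s_i)`; by Chebyshev's sum inequality
the second mean is the smaller one. The remaining `e^{Ks}`-moment is matched by the intermediate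
value theorem: at the two extreme values of `p` its defect has opposite signs, by Jensen's
inequality for the logarithmic mean `(x - 1) / log x`, which is concave because it equals
`∫₀¹ x^t dt`.
-/

lemma mul_add_mul_pos {a b x y : ℝ} (ha : 0 ≤ a) (hb : 0 ≤ b) (hab : 0 < a + b)
    (hx : 0 < x) (hy : 0 < y) : 0 < a * x + b * y := by
  rcases ha.eq_or_lt with rfl | ha
  · simp only [zero_mul, zero_add] at hab ⊢; positivity
  · have := mul_nonneg hb hy.le; positivity

/-- The logarithmic mean `(x - 1) / log x` of `x` and `1`, in a form that needs no case split at
`x = 1`. -/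
noncomputable def logMean (x : ℝ) : ℝ := ∫ t in (0 : ℝ)..1, x ^ t

lemma logMean_mul_log {x : ℝ} (hx : 0 < x) : logMean x * log x = x - 1 := by
  have hint : IntervalIntegrable (fun t => x ^ t * log x) volume 0 1 :=
    ((continuous_const_rpow hx.ne').mul continuous_const).intervalIntegrable _ _
  rw [logMean, ← intervalIntegral.integral_mul_const,
    intervalIntegral.integral_eq_sub_of_hasDerivAt
      (fun t _ => (hasStrictDerivAt_const_rpow hx t).hasDerivAt) hint]
  simp

lemma logMean_exp_mul (u : ℝ) : logMean (exp u) * u = exp u - 1 := by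
  simpa using logMean_mul_log (exp_pos u)

lemma concaveOn_logMean : ConcaveOn ℝ (Ioi 0) logMean := by
  refine ⟨convex_Ioi 0, fun x hx y hy a b ha hb hab => ?_⟩
  have hint : ∀ z : ℝ, 0 < z → ∀ c : ℝ, IntervalIntegrable (fun t => c * z ^ t) volume 0 1 :=
    fun z hz c => (continuous_const.mul (continuous_const_rpow hz.ne')).intervalIntegrable _ _
  simp only [smul_eq_mul, logMean]
  rw [← intervalIntegral.integral_const_mul, ← intervalIntegral.integral_const_mul,
    ← intervalIntegral.integral_add (hint x hx a) (hint y hy b)]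
  refine intervalIntegral.integral_mono_on zero_le_one ((hint x hx a).add (hint y hy b)) ?_
    fun t ht => (concaveOn_rpow ht.1 ht.2).2 (Ioi_subset_Ici_self hx) (Ioi_subset_Ici_self hy)
      ha hb hab
  simpa using hint _ (mul_add_mul_pos ha hb (by rw [hab]; exact one_pos) hx hy) 1

lemma mul_logMean_add_mul_logMean_le {ρ₁ ρ₂ x₁ x₂ x : ℝ} (hρ₁ : 0 ≤ ρ₁) (hρ₂ : 0 ≤ ρ₂)
    (hρ : 0 < ρ₁ + ρ₂) (hx₁ : 0 < x₁) (hx₂ : 0 < x₂) (hx : (ρ₁ + ρ₂) * x = ρ₁ * x₁ + ρ₂ * x₂) :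
    ρ₁ * logMean x₁ + ρ₂ * logMean x₂ ≤ (ρ₁ + ρ₂) * logMean x := by
  have h := concaveOn_logMean.2 hx₁ hx₂ (div_nonneg hρ₁ hρ.le) (div_nonneg hρ₂ hρ.le)
    (by field_simp)
  have hmean : ρ₁ / (ρ₁ + ρ₂) * x₁ + ρ₂ / (ρ₁ + ρ₂) * x₂ = x := by
    field_simp; linear_combination -hx
  simp only [smul_eq_mul, hmean] at h
  calc ρ₁ * logMean x₁ + ρ₂ * logMean x₂
      = (ρ₁ + ρ₂) * (ρ₁ / (ρ₁ + ρ₂) * logMean x₁ + ρ₂ / (ρ₁ + ρ₂) * logMean x₂) := by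
        field_simp
    _ ≤ (ρ₁ + ρ₂) * logMean x := mul_le_mul_of_nonneg_left h hρ.le

noncomputable def expMoments (K s : ℝ) : ℝ × ℝ × ℝ × ℝ := (1, s, exp (K * s), s * exp (K * s))

/-- For `m = (S, M, P, Q)` and `p ∈ (0, 1)` there are unique weights at `0, p, 1` with moments
`S, M, Q` against `1, s, s e^{Ks}`; `upperResidual K p m` is `p (e^K - e^{Kp})` times the excess of
their `e^{Ks}`-moment over `P`. -/
noncomputable def upperResidual (K p : ℝ) : ℝ × ℝ × ℝ × ℝ → ℝ
  | (S, M, P, Q) => (M * exp K - Q) * (exp (K * p) - 1) + (Q - M * exp (K * p)) * (exp K - 1) * p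
      - (P - S) * (exp K - exp (K * p)) * p

lemma exists_nonneg_combination_of_upperResidual_eq_zero {K p S M P Q : ℝ} (hK : 0 < K)
    (hp : p ∈ Ioo 0 1) (hH : upperResidual K p (S, M, P, Q) = 0) (hc : Q ≤ M * exp K)
    (hγ : M * exp (K * p) ≤ Q) (hβ : P - Q ≤ (S - M) * exp (K * p)) :
    ∃ β c γ : ℝ, 0 ≤ β ∧ 0 ≤ c ∧ 0 ≤ γ ∧
      (S, M, P, Q) = β • expMoments K 0 + c • expMoments K p + γ • expMoments K 1 := by
  have hω : 1 < exp (K * p) := one_lt_exp_iff.2 (mul_pos hK hp.1)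
  have hωW : exp (K * p) < exp K := exp_lt_exp.2 (by nlinarith [hp.2])
  simp only [upperResidual] at hH
  simp only [expMoments, Prod.smul_mk, Prod.mk_add_mk, smul_eq_mul, Prod.mk.injEq, mul_zero,
    exp_zero, mul_one, one_mul, zero_add]
  generalize exp (K * p) = ω at *
  have hp₀ : p ≠ 0 := hp.1.ne'
  have hω₁ : ω - 1 ≠ 0 := by linarith
  have hωK : exp K - ω ≠ 0 := by linarith
  have hpW : 0 < p * (exp K - ω) := mul_pos hp.1 (sub_pos.2 hωW)
  refine ⟨((S - M) * ω - (P - Q)) / (ω - 1), (M * exp K - Q) / (p * (exp K - ω)),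
    (Q - M * ω) / (exp K - ω), div_nonneg (by linarith) (by linarith),
    div_nonneg (by linarith) hpW.le, div_nonneg (by linarith) (by linarith), ?_, ?_, ?_, ?_⟩
  all_goals field_simp
  · linear_combination -hH
  · ring
  · linear_combination -ω * hH
  · ring

lemma upperResidual_nonneg {K a₁ a₂ s₁ s₂ p : ℝ} (hK : 0 < K) (hρ₁ : 0 ≤ a₁ * s₁)
    (hρ₂ : 0 ≤ a₂ * s₂) (hρ : 0 < a₁ * s₁ + a₂ * s₂) (hp : p ∈ Icc 0 1)
    (hω : (a₁ * s₁ + a₂ * s₂) * exp (K * p) =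
      a₁ * s₁ * exp (K * s₁) + a₂ * s₂ * exp (K * s₂)) :
    0 ≤ upperResidual K p (a₁ • expMoments K s₁ + a₂ • expMoments K s₂) := by
  have hJ := mul_logMean_add_mul_logMean_le hρ₁ hρ₂ hρ (exp_pos _) (exp_pos _) hω
  have hωW : exp (K * p) ≤ exp K := exp_le_exp.2 (by nlinarith [hp.2])
  have hsum : K * (a₁ * s₁ * logMean (exp (K * s₁)) + a₂ * s₂ * logMean (exp (K * s₂)))
      = a₁ * exp (K * s₁) + a₂ * exp (K * s₂) - (a₁ + a₂) := by
    linear_combination a₁ * logMean_exp_mul (K * s₁) + a₂ * logMean_exp_mul (K * s₂)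
  have hmean : K * p * logMean (exp (K * p)) = exp (K * p) - 1 := by
    linear_combination logMean_exp_mul (K * p)
  have key : upperResidual K p (a₁ • expMoments K s₁ + a₂ • expMoments K s₂) =
      (exp K - exp (K * p)) * p * K * ((a₁ * s₁ + a₂ * s₂) * logMean (exp (K * p)) -
        (a₁ * s₁ * logMean (exp (K * s₁)) + a₂ * s₂ * logMean (exp (K * s₂)))) := by
    simp only [upperResidual, expMoments, Prod.smul_mk, smul_eq_mul]
    linear_combination (exp (K * p) - 1 - (exp K - 1) * p) * hω
      - (exp K - exp (K * p)) * (a₁ * s₁ + a₂ * s₂) * hmean + (exp K - exp (K * p)) * p * hsum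
  rw [key]
  exact mul_nonneg (mul_nonneg (mul_nonneg (sub_nonneg.2 hωW) hp.1) hK.le) (sub_nonneg.2 hJ)

lemma upperResidual_nonpos {K a₁ a₂ s₁ s₂ p : ℝ} (hK : 0 < K) (hρ₁ : 0 ≤ a₁ * (1 - s₁))
    (hρ₂ : 0 ≤ a₂ * (1 - s₂)) (hρ : 0 < a₁ * (1 - s₁) + a₂ * (1 - s₂)) (hp : p ∈ Icc 0 1)
    (hω : (a₁ * (1 - s₁) + a₂ * (1 - s₂)) * exp (K * p) =
      a₁ * (1 - s₁) * exp (K * s₁) + a₂ * (1 - s₂) * exp (K * s₂)) :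
    upperResidual K p (a₁ • expMoments K s₁ + a₂ • expMoments K s₂) ≤ 0 := by
  have hshift : ∀ s, exp (K * (s - 1)) * exp K = exp (K * s) := fun s => by
    rw [← exp_add]; ring_nf
  have hJ := mul_logMean_add_mul_logMean_le hρ₁ hρ₂ hρ (exp_pos _) (exp_pos _)
    (x₁ := exp (K * (s₁ - 1))) (x₂ := exp (K * (s₂ - 1))) (x := exp (K * (p - 1)))
    (mul_right_cancel₀ (exp_ne_zero K) (by
      linear_combination hω + (a₁ * (1 - s₁) + a₂ * (1 - s₂)) * hshift p
        - a₁ * (1 - s₁) * hshift s₁ - a₂ * (1 - s₂) * hshift s₂))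
  have hsum : K * exp K * (a₁ * (1 - s₁) * logMean (exp (K * (s₁ - 1)))
      + a₂ * (1 - s₂) * logMean (exp (K * (s₂ - 1))))
      = (a₁ + a₂) * exp K - (a₁ * exp (K * s₁) + a₂ * exp (K * s₂)) := by
    linear_combination -exp K * a₁ * logMean_exp_mul (K * (s₁ - 1))
      - exp K * a₂ * logMean_exp_mul (K * (s₂ - 1)) - a₁ * hshift s₁ - a₂ * hshift s₂
  have hmean : K * exp K * (1 - p) * logMean (exp (K * (p - 1))) = exp K - exp (K * p) := by
    linear_combination -exp K * logMean_exp_mul (K * (p - 1)) - hshift p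
  have key : upperResidual K p (a₁ • expMoments K s₁ + a₂ • expMoments K s₂) =
      (exp (K * p) - 1) * (1 - p) * K * exp K *
        (a₁ * (1 - s₁) * logMean (exp (K * (s₁ - 1)))
          + a₂ * (1 - s₂) * logMean (exp (K * (s₂ - 1)))
          - (a₁ * (1 - s₁) + a₂ * (1 - s₂)) * logMean (exp (K * (p - 1)))) := by
    simp only [upperResidual, expMoments, Prod.smul_mk, smul_eq_mul]
    linear_combination ((exp K - 1) * p - (exp (K * p) - 1)) * hω
      - (exp (K * p) - 1) * (1 - p) * hsum
      + (exp (K * p) - 1) * (a₁ * (1 - s₁) + a₂ * (1 - s₂)) * hmean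
  rw [key]
  have hω₁ : 1 ≤ exp (K * p) := one_le_exp (mul_nonneg hK.le hp.1)
  exact mul_nonpos_of_nonneg_of_nonpos (mul_nonneg (mul_nonneg (mul_nonneg
    (sub_nonneg.2 hω₁) (sub_nonneg.2 hp.2)) hK.le) (exp_pos K).le) (sub_nonpos.2 hJ)

lemma exists_mem_Ioo_exp_mul_eq {K ω : ℝ} (hK : 0 < K) (h₁ : 1 < ω) (hK' : ω < exp K) :
    ∃ p ∈ Ioo (0 : ℝ) 1, exp (K * p) = ω := by
  have hω : 0 < ω := one_pos.trans h₁
  refine ⟨log ω / K, ⟨div_pos (log_pos h₁) hK, (div_lt_one hK).2 ?_⟩, ?_⟩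
  · exact (log_lt_iff_lt_exp hω).2 hK'
  · rw [mul_div_cancel₀ _ hK.ne', exp_log hω]

lemma exists_mem_Ioo_exp_mul_eq_weighted_mean {K ρ₁ ρ₂ s₁ s₂ : ℝ} (hK : 0 < K) (hρ₁ : 0 ≤ ρ₁)
    (hρ₂ : 0 ≤ ρ₂) (hρ : 0 < ρ₁ + ρ₂) (hs₁ : s₁ ∈ Ioo 0 1) (hs₂ : s₂ ∈ Ioo 0 1) :
    ∃ p ∈ Ioo (0 : ℝ) 1, (ρ₁ + ρ₂) * exp (K * p) = ρ₁ * exp (K * s₁) + ρ₂ * exp (K * s₂) := by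
  have he : ∀ s ∈ Ioo (0 : ℝ) 1, 1 < exp (K * s) ∧ exp (K * s) < exp K := fun s hs =>
    ⟨one_lt_exp_iff.2 (mul_pos hK hs.1), exp_lt_exp.2 (by nlinarith [hs.2])⟩
  obtain ⟨he₁, he₁K⟩ := he s₁ hs₁
  obtain ⟨he₂, he₂K⟩ := he s₂ hs₂
  have h₁ := mul_add_mul_pos hρ₁ hρ₂ hρ (sub_pos.2 he₁) (sub_pos.2 he₂)
  have hK' := mul_add_mul_pos hρ₁ hρ₂ hρ (sub_pos.2 he₁K) (sub_pos.2 he₂K)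
  obtain ⟨p, hp, hω⟩ := exists_mem_Ioo_exp_mul_eq hK
    (ω := (ρ₁ * exp (K * s₁) + ρ₂ * exp (K * s₂)) / (ρ₁ + ρ₂))
    ((one_lt_div hρ).2 (by linarith)) ((div_lt_iff₀' hρ).2 (by linarith))
  exact ⟨p, hp, by rw [hω]; field_simp⟩

lemma le_of_weighted_exp_means {K a₁ a₂ s₁ s₂ p q : ℝ} (hK : 0 < K) (ha₁ : 0 ≤ a₁)
    (ha₂ : 0 ≤ a₂) (hρ : 0 < a₁ * s₁ + a₂ * s₂) (hσ : 0 < a₁ * (1 - s₁) + a₂ * (1 - s₂))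
    (hq : (a₁ * (1 - s₁) + a₂ * (1 - s₂)) * exp (K * q) =
      a₁ * (1 - s₁) * exp (K * s₁) + a₂ * (1 - s₂) * exp (K * s₂))
    (hp : (a₁ * s₁ + a₂ * s₂) * exp (K * p) =
      a₁ * s₁ * exp (K * s₁) + a₂ * s₂ * exp (K * s₂)) :
    q ≤ p := by
  have hmono : 0 ≤ (s₂ - s₁) * (exp (K * s₂) - exp (K * s₁)) :=
    (monotone_id.monovary fun _ _ h =>
      exp_le_exp.2 (mul_le_mul_of_nonneg_left h hK.le)).sub_mul_sub_nonneg s₁ s₂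
  have hcheb := mul_nonneg (mul_nonneg ha₁ ha₂) hmono
  have hexp : exp (K * q) ≤ exp (K * p) := by
    refine le_of_mul_le_mul_left ?_ (mul_pos hρ hσ)
    linear_combination (a₁ * s₁ + a₂ * s₂) * hq - (a₁ * (1 - s₁) + a₂ * (1 - s₂)) * hp + hcheb
  exact le_of_mul_le_mul_left (exp_le_exp.1 hexp) hK

theorem exists_three_point_expMoments_eq {K a₁ a₂ s₁ s₂ : ℝ} (hK : 0 < K) (ha₁ : 0 ≤ a₁)
    (ha₂ : 0 ≤ a₂) (ha : 0 < a₁ + a₂) (hs₁ : s₁ ∈ Ioo 0 1) (hs₂ : s₂ ∈ Ioo 0 1) :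
    ∃ p ∈ Icc (0 : ℝ) 1, ∃ β c γ : ℝ, 0 ≤ β ∧ 0 ≤ c ∧ 0 ≤ γ ∧
      a₁ • expMoments K s₁ + a₂ • expMoments K s₂ =
        β • expMoments K 0 + c • expMoments K p + γ • expMoments K 1 := by
  have hρ₁ : 0 ≤ a₁ * s₁ := mul_nonneg ha₁ hs₁.1.le
  have hρ₂ : 0 ≤ a₂ * s₂ := mul_nonneg ha₂ hs₂.1.le
  have hσ₁ : 0 ≤ a₁ * (1 - s₁) := mul_nonneg ha₁ (sub_nonneg.2 hs₁.2.le)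
  have hσ₂ : 0 ≤ a₂ * (1 - s₂) := mul_nonneg ha₂ (sub_nonneg.2 hs₂.2.le)
  have hρ := mul_add_mul_pos ha₁ ha₂ ha hs₁.1 hs₂.1
  have hσ := mul_add_mul_pos ha₁ ha₂ ha (sub_pos.2 hs₁.2) (sub_pos.2 hs₂.2)
  obtain ⟨pb, hpb, hωb⟩ := exists_mem_Ioo_exp_mul_eq_weighted_mean hK hρ₁ hρ₂ hρ hs₁ hs₂
  obtain ⟨pm, hpm, hωm⟩ := exists_mem_Ioo_exp_mul_eq_weighted_mean hK hσ₁ hσ₂ hσ hs₁ hs₂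
  have hpmb : pm ≤ pb := le_of_weighted_exp_means hK ha₁ ha₂ hρ hσ hωm hωb
  have hcont : Continuous fun p ↦
      upperResidual K p (a₁ • expMoments K s₁ + a₂ • expMoments K s₂) := by
    simp only [upperResidual, expMoments, Prod.smul_mk, smul_eq_mul]
    fun_prop
  obtain ⟨p, hp, hH⟩ := intermediate_value_Icc hpmb hcont.continuousOn
    ⟨upperResidual_nonpos hK hσ₁ hσ₂ hσ ⟨hpm.1.le, hpm.2.le⟩ hωm,
      upperResidual_nonneg hK hρ₁ hρ₂ hρ ⟨hpb.1.le, hpb.2.le⟩ hωb⟩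
  have hexp_le : ∀ {x y : ℝ}, x ≤ y → exp (K * x) ≤ exp (K * y) := fun h =>
    exp_le_exp.2 (mul_le_mul_of_nonneg_left h hK.le)
  have hm : a₁ • expMoments K s₁ + a₂ • expMoments K s₂ =
      (a₁ + a₂, a₁ * s₁ + a₂ * s₂, a₁ * exp (K * s₁) + a₂ * exp (K * s₂),
        a₁ * s₁ * exp (K * s₁) + a₂ * s₂ * exp (K * s₂)) := by
    simp only [expMoments, Prod.smul_mk, Prod.mk_add_mk, smul_eq_mul, mul_one, mul_assoc]
  rw [hm] at hH ⊢
  refine ⟨p, ⟨hpm.1.le.trans hp.1, hp.2.trans hpb.2.le⟩,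
    exists_nonneg_combination_of_upperResidual_eq_zero hK
      ⟨hpm.1.trans_le hp.1, hp.2.trans_lt hpb.2⟩ hH ?_ ?_ ?_⟩
  · have hpb₁ : exp (K * pb) ≤ exp K := by simpa using hexp_le hpb.2.le
    linear_combination mul_le_mul_of_nonneg_left hpb₁ hρ.le - hωb
  · linear_combination mul_le_mul_of_nonneg_left (hexp_le hp.2) hρ.le + hωb
  · linear_combination mul_le_mul_of_nonneg_left (hexp_le hp.1) hσ.le - hωm

lemma psi_eq (lam s : ℝ) :
    psi lam s = exp (4 * lam * s) / (exp (4 * lam * s) + exp (2 * lam)) := by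
  rw [psi, show 2 * lam * (1 - 2 * s) = 2 * lam - 4 * lam * s by ring, exp_sub]
  field_simp

lemma mul_smul_vpoint (lam a s : ℝ) :
    (a * (exp (4 * lam * s) + exp (2 * lam))) • vpoint lam s =
      a • (s * (exp (4 * lam * s) + exp (2 * lam)), exp (4 * lam * s), s * exp (4 * lam * s)) := by
  have : exp (4 * lam * s) + exp (2 * lam) ≠ 0 := by positivity
  simp only [vpoint, psi_eq, Prod.smul_mk, smul_eq_mul, Prod.mk.injEq]
  refine ⟨?_, ?_, ?_⟩ <;> field_simp

/-- **Two-point to three-point representation.** Fix `λ > 0`. For all `0 < p₁ < p₂ < 1`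
and every `q ∈ [0,1]`, there exist `p ∈ [0,1]` and nonnegative reals `x, y, z` with
`x + y + z = 1` such that `q·v(p₁) + (1−q)·v(p₂) = x·v(p) + y·v(0) + z·v(1)`. -/
theorem two_point_to_three_point (lam : ℝ) (hlam : 0 < lam)
    (p1 p2 : ℝ) (hp1 : 0 < p1) (hp12 : p1 < p2) (hp2 : p2 < 1)
    (q : ℝ) (hq : q ∈ Set.Icc (0 : ℝ) 1) :
    ∃ p ∈ Set.Icc (0 : ℝ) 1, ∃ x y z : ℝ,
      0 ≤ x ∧ 0 ≤ y ∧ 0 ≤ z ∧ x + y + z = 1 ∧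
      q • vpoint lam p1 + (1 - q) • vpoint lam p2 =
        x • vpoint lam p + y • vpoint lam 0 + z • vpoint lam 1 := by
  have hw : ∀ s, 0 < exp (4 * lam * s) + exp (2 * lam) := fun s => by positivity
  set a₁ := q / (exp (4 * lam * p1) + exp (2 * lam))
  set a₂ := (1 - q) / (exp (4 * lam * p2) + exp (2 * lam))
  have hq₁ : q = a₁ * (exp (4 * lam * p1) + exp (2 * lam)) :=
    (div_mul_cancel₀ _ (hw p1).ne').symm
  have hq₂ : 1 - q = a₂ * (exp (4 * lam * p2) + exp (2 * lam)) :=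
    (div_mul_cancel₀ _ (hw p2).ne').symm
  have ha₁ : 0 ≤ a₁ := div_nonneg hq.1 (hw p1).le
  have ha₂ : 0 ≤ a₂ := div_nonneg (sub_nonneg.2 hq.2) (hw p2).le
  have ha : 0 < a₁ + a₂ := by
    by_contra! h
    nlinarith [hw p1, hw p2]
  obtain ⟨p, hp, β, c, γ, hβ, hc, hγ, hm⟩ := exists_three_point_expMoments_eq
    (mul_pos four_pos hlam) ha₁ ha₂ ha ⟨hp1, hp12.trans hp2⟩ ⟨hp1.trans hp12, hp2⟩
  simp only [expMoments, Prod.smul_mk, Prod.mk_add_mk, smul_eq_mul, Prod.mk.injEq] at hm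
  obtain ⟨hS, hM, hP, hQ⟩ := hm
  refine ⟨p, hp, c * (exp (4 * lam * p) + exp (2 * lam)), β * (exp (4 * lam * 0) + exp (2 * lam)),
    γ * (exp (4 * lam * 1) + exp (2 * lam)), mul_nonneg hc (hw p).le, mul_nonneg hβ (hw 0).le,
    mul_nonneg hγ (hw 1).le, ?_, ?_⟩
  · linear_combination -hP - exp (2 * lam) * hS - hq₁ - hq₂
  · rw [hq₂, hq₁]
    simp only [mul_smul_vpoint, Prod.smul_mk, Prod.mk_add_mk, smul_eq_mul, Prod.mk.injEq]
    exact ⟨by linear_combination hQ + exp (2 * lam) * hM, by linear_combination hP,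
      by linear_combination hQ⟩
end

section
/- Characterization of pairwise majority optimality: let n ≥ 1 be an integer, μ ∈ [0,1], and 0 < q_0 ≤ q_1 < 1. Then the following are equivalent: (i) for every integer x with 0 ≤ x < n/2, μ·q_1^x(1−q_1)^{n−x} + (1−μ)·q_0^{n−x}(1−q_0)^x ≤ (1−μ)·q_0^x(1−q_0)^{n−x} + μ·q_1^{n−x}(1−q_1)^x; (ii) μ·(q_1(1−q_1))^{⌊(n−1)/2⌋}·(1−2q_1) ≤ (1−μ)·(q_0(1−q_0))^{⌊(n−1)/2⌋}·(1−2q_0). -/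
/-- The symmetric sum `∑ i < m, (1-q)^i q^(m-1-i)`, so that
`(1-q)^m - q^m = (1-2q) * Ssum q m`. -/
noncomputable def Ssum (q : ℝ) (m : ℕ) : ℝ := ∑ i ∈ Finset.range m, (1-q)^i * q^(m-1-i)

lemma Ssum_one (q : ℝ) : Ssum q 1 = 1 := by simp [Ssum]

lemma Ssum_two (q : ℝ) : Ssum q 2 = 1 := by
  simp [Ssum, Finset.sum_range_succ]

lemma Ssum_nonneg (q : ℝ) (h0 : 0 ≤ q) (h1 : q ≤ 1) (m : ℕ) : 0 ≤ Ssum q m :=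
  Finset.sum_nonneg fun i _ => mul_nonneg (pow_nonneg (by linarith) _) (pow_nonneg h0 _)

lemma Ssum_sym (q : ℝ) (m : ℕ) : Ssum (1-q) m = Ssum q m := by
  unfold Ssum
  rw [← Finset.sum_range_reflect]
  refine Finset.sum_congr rfl fun i hi => ?_
  simp only [Finset.mem_range] at hi
  have h1 : (1:ℝ) - (1-q) = q := by ring
  have h2 : m - 1 - (m - 1 - i) = i := by omega
  rw [h1, h2, mul_comm]

lemma geom_identity' (q : ℝ) (m : ℕ) : (1 - 2*q) * Ssum q m = (1-q)^m - q^m := by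
  have h := geom_sum₂_mul (1-q) q m
  unfold Ssum
  linear_combination h

lemma Ssum_rec (q : ℝ) (m : ℕ) :
    Ssum q (m+2) = q*(1-q)*Ssum q m + q^(m+1) + (1-q)^(m+1) := by
  unfold Ssum
  rw [Finset.sum_range_succ']
  rw [Finset.sum_range_succ]
  have h1 : ∀ i ∈ Finset.range m, (1-q)^(i+1) * q^(m+2-1-(i+1)) = (q*(1-q)) * ((1-q)^i * q^(m-1-i)) := by
    intro i hi
    simp only [Finset.mem_range] at hi
    have : m + 2 - 1 - (i+1) = (m-1-i) + 1 := by omega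
    rw [this, pow_succ, pow_succ]
    ring
  rw [Finset.sum_congr rfl h1, ← Finset.mul_sum]
  have h2 : m + 2 - 1 - (m+1) = 0 := by omega
  have h3 : m + 2 - 1 - 0 = m + 1 := by omega
  rw [h2, h3]
  ring

/-- `q ↦ q^p + (1-q)^p` is antitone on `[0, 1/2]`. -/
lemma pow_sum_anti (q0 q1 : ℝ) (h0 : 0 ≤ q0) (h01 : q0 ≤ q1) (h1 : q1 ≤ 1/2) (p : ℕ) :
    q1^p + (1-q1)^p ≤ q0^p + (1-q0)^p := by
  have g1 := geom_sum₂_mul (1-q0) (1-q1) p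
  have g2 := geom_sum₂_mul q1 q0 p
  have hs : (∑ i ∈ Finset.range p, q1^i * q0^(p-1-i)) ≤
      ∑ i ∈ Finset.range p, (1-q0)^i * (1-q1)^(p-1-i) := by
    refine Finset.sum_le_sum fun i _ => ?_
    have hq1 : 0 ≤ q1 := le_trans h0 h01
    exact mul_le_mul (pow_le_pow_left₀ hq1 (by linarith) i)
      (pow_le_pow_left₀ h0 (by linarith) _) (pow_nonneg h0 _)
      (pow_nonneg (by linarith) _)
  nlinarith [mul_nonneg (sub_nonneg.2 hs) (sub_nonneg.2 h01), g1, g2]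

/-- Key cross-ratio monotonicity, by induction on `k`. -/
lemma cross (q0 q1 : ℝ) (h0 : 0 < q0) (h01 : q0 ≤ q1) (h1 : q1 ≤ 1/2) (m0 : ℕ)
    (hbase : Ssum q1 m0 ≤ Ssum q0 m0) (k : ℕ) :
    Ssum q1 (m0 + 2*k) * (q0*(1-q0))^k ≤ Ssum q0 (m0 + 2*k) * (q1*(1-q1))^k := by
  have hb1 : (0:ℝ) < 1 - q1 := by linarith
  have hb0 : (0:ℝ) < 1 - q0 := by linarith
  have hq1 : (0:ℝ) < q1 := lt_of_lt_of_le h0 h01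
  induction k with
  | zero => simpa using hbase
  | succ k ih =>
    have hm : m0 + 2*(k+1) = (m0 + 2*k) + 2 := by ring
    rw [hm, Ssum_rec, Ssum_rec]
    set m := m0 + 2*k with hmdef
    have A : q1*(1-q1)*Ssum q1 m * (q0*(1-q0))^(k+1) ≤
        q0*(1-q0)*Ssum q0 m * (q1*(1-q1))^(k+1) := by
      have step := mul_le_mul_of_nonneg_left ih
        (show (0:ℝ) ≤ (q1*(1-q1))*(q0*(1-q0)) by positivity)
      calc q1*(1-q1)*Ssum q1 m * (q0*(1-q0))^(k+1)
          = (q1*(1-q1))*(q0*(1-q0)) * (Ssum q1 m * (q0*(1-q0))^k) := by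
            rw [pow_succ]; ring
        _ ≤ (q1*(1-q1))*(q0*(1-q0)) * (Ssum q0 m * (q1*(1-q1))^k) := step
        _ = q0*(1-q0)*Ssum q0 m * (q1*(1-q1))^(k+1) := by rw [pow_succ]; ring
    have B : (q1^(m+1) + (1-q1)^(m+1)) * (q0*(1-q0))^(k+1) ≤
        (q0^(m+1) + (1-q0)^(m+1)) * (q1*(1-q1))^(k+1) := by
      refine mul_le_mul (pow_sum_anti q0 q1 h0.le h01 h1 (m+1))
        (pow_le_pow_left₀ (by positivity) (by nlinarith) _)
        (by positivity) (by positivity)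
    have eL : (q1*(1-q1)*Ssum q1 m + q1^(m+1) + (1-q1)^(m+1)) * (q0*(1-q0))^(k+1)
        = q1*(1-q1)*Ssum q1 m * (q0*(1-q0))^(k+1)
          + (q1^(m+1) + (1-q1)^(m+1)) * (q0*(1-q0))^(k+1) := by ring
    have eR : (q0*(1-q0)*Ssum q0 m + q0^(m+1) + (1-q0)^(m+1)) * (q1*(1-q1))^(k+1)
        = q0*(1-q0)*Ssum q0 m * (q1*(1-q1))^(k+1)
          + (q0^(m+1) + (1-q0)^(m+1)) * (q1*(1-q1))^(k+1) := by ring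
    linarith [A, B]

/-- Factorization of the defect `q^x (1-q)^(n-x) - q^(n-x) (1-q)^x`. -/
lemma expand (q : ℝ) (n x : ℕ) (h : 2*x < n) :
    q^x * (1-q)^(n-x) - q^(n-x) * (1-q)^x
      = (q*(1-q))^x * (1-2*q) * Ssum q (n-2*x) := by
  have hnx : n - x = x + (n - 2*x) := by omega
  rw [hnx, pow_add, pow_add, mul_pow]
  linear_combination (-(q^x * (1-q)^x)) * geom_identity' q (n-2*x)

/-- **Characterization of pairwise majority optimality.** For an integer `n ≥ 1`,
`μ ∈ [0,1]` and `0 < q₀ ≤ q₁ < 1`, the family of inequalities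
`μ·q₁^x(1−q₁)^{n−x} + (1−μ)·q₀^{n−x}(1−q₀)^x ≤ (1−μ)·q₀^x(1−q₀)^{n−x} + μ·q₁^{n−x}(1−q₁)^x`
for every integer `0 ≤ x < n/2` is equivalent to the single inequality
`μ·(q₁(1−q₁))^⌊(n−1)/2⌋·(1−2q₁) ≤ (1−μ)·(q₀(1−q₀))^⌊(n−1)/2⌋·(1−2q₀)`. -/
theorem pairwise_majority_optimality_characterization
    (n : ℕ) (hn : 1 ≤ n) (μ q0 q1 : ℝ)
    (hμ0 : 0 ≤ μ) (hμ1 : μ ≤ 1) (hq0 : 0 < q0) (hq01 : q0 ≤ q1) (hq1 : q1 < 1) :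
    (∀ x : ℕ, 2 * x < n →
        μ * q1 ^ x * (1 - q1) ^ (n - x) + (1 - μ) * q0 ^ (n - x) * (1 - q0) ^ x ≤
          (1 - μ) * q0 ^ x * (1 - q0) ^ (n - x) + μ * q1 ^ (n - x) * (1 - q1) ^ x) ↔
      μ * (q1 * (1 - q1)) ^ ((n - 1) / 2) * (1 - 2 * q1) ≤
        (1 - μ) * (q0 * (1 - q0)) ^ ((n - 1) / 2) * (1 - 2 * q0) := by
  have hb1 : (0:ℝ) < 1 - q1 := by linarith
  have hb0 : (0:ℝ) < 1 - q0 := by linarith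
  have hq1p : (0:ℝ) < q1 := lt_of_lt_of_le hq0 hq01
  set x0 := (n-1)/2 with hx0def
  have hx0 : 2 * x0 < n := by omega
  have hm0 : n - 2*x0 = 1 ∨ n - 2*x0 = 2 := by omega
  have hSone : ∀ q : ℝ, Ssum q (n - 2*x0) = 1 := by
    intro q; rcases hm0 with h | h <;> rw [h]
    · exact Ssum_one q
    · exact Ssum_two q
  have equiv : ∀ x : ℕ, 2 * x < n →
      ((μ * q1 ^ x * (1 - q1) ^ (n - x) + (1 - μ) * q0 ^ (n - x) * (1 - q0) ^ x ≤
          (1 - μ) * q0 ^ x * (1 - q0) ^ (n - x) + μ * q1 ^ (n - x) * (1 - q1) ^ x) ↔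
        μ * (q1*(1-q1))^x * (1-2*q1) * Ssum q1 (n-2*x) ≤
          (1-μ) * (q0*(1-q0))^x * (1-2*q0) * Ssum q0 (n-2*x)) := by
    intro x hx
    have e1 := expand q1 n x hx
    have e0 := expand q0 n x hx
    have key : μ * (q1*(1-q1))^x * (1-2*q1) * Ssum q1 (n-2*x)
        - (1-μ) * (q0*(1-q0))^x * (1-2*q0) * Ssum q0 (n-2*x)
        = (μ * q1 ^ x * (1 - q1) ^ (n - x) + (1 - μ) * q0 ^ (n - x) * (1 - q0) ^ x)
          - ((1 - μ) * q0 ^ x * (1 - q0) ^ (n - x) + μ * q1 ^ (n - x) * (1 - q1) ^ x) := by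
      linear_combination (1-μ) * e0 - μ * e1
    constructor <;> intro h <;> linarith
  constructor
  · intro h
    have h0 := (equiv x0 hx0).1 (h x0 hx0)
    rw [hSone q1, hSone q0, mul_one, mul_one] at h0
    exact h0
  · intro H x hx
    refine (equiv x hx).2 ?_
    obtain ⟨k, hk⟩ : ∃ k, x0 = x + k := ⟨x0 - x, by omega⟩
    have hmx : n - 2*x = (n - 2*x0) + 2*k := by omega
    rw [hmx]
    have hP0 : (0:ℝ) < (q0*(1-q0))^k := by positivity
    have hP1 : (0:ℝ) < (q1*(1-q1))^k := by positivity
    have hS1n : 0 ≤ Ssum q1 (n - 2*x0 + 2*k) := Ssum_nonneg q1 hq1p.le hq1.le _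
    have hS0n : 0 ≤ Ssum q0 (n - 2*x0 + 2*k) := Ssum_nonneg q0 hq0.le (by linarith) _
    by_cases hc1 : q1 ≤ 1/2
    · -- both biases ≤ 1/2
      have hbase : Ssum q1 (n - 2*x0) ≤ Ssum q0 (n - 2*x0) := by
        rw [hSone q1, hSone q0]
      have cr := cross q0 q1 hq0 hq01 hc1 (n - 2*x0) hbase k
      have hA : (0:ℝ) ≤ μ * (1-2*q1) * (q1*(1-q1))^x :=
        mul_nonneg (mul_nonneg hμ0 (by linarith)) (by positivity)
      refine le_of_mul_le_mul_right ?_ hP0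
      calc μ * (q1*(1-q1))^x * (1-2*q1) * Ssum q1 (n - 2*x0 + 2*k) * (q0*(1-q0))^k
          = (μ * (1-2*q1) * (q1*(1-q1))^x) *
              (Ssum q1 (n - 2*x0 + 2*k) * (q0*(1-q0))^k) := by ring
        _ ≤ (μ * (1-2*q1) * (q1*(1-q1))^x) *
              (Ssum q0 (n - 2*x0 + 2*k) * (q1*(1-q1))^k) :=
            mul_le_mul_of_nonneg_left cr hA
        _ = (μ * (q1*(1-q1))^x0 * (1-2*q1)) * Ssum q0 (n - 2*x0 + 2*k) := by
            rw [hk, pow_add]; ring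
        _ ≤ ((1-μ) * (q0*(1-q0))^x0 * (1-2*q0)) * Ssum q0 (n - 2*x0 + 2*k) :=
            mul_le_mul_of_nonneg_right H hS0n
        _ = (1-μ) * (q0*(1-q0))^x * (1-2*q0) * Ssum q0 (n - 2*x0 + 2*k) * (q0*(1-q0))^k := by
            rw [hk, pow_add]; ring
    · push_neg at hc1
      by_cases hc0 : q0 ≤ 1/2
      · -- mixed case: LHS ≤ 0 ≤ RHS
        have hL : μ * (q1*(1-q1))^x * (1-2*q1) * Ssum q1 (n - 2*x0 + 2*k) ≤ 0 := by
          have h1 : μ * (q1*(1-q1))^x * (1-2*q1) ≤ 0 :=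
            mul_nonpos_of_nonneg_of_nonpos (by positivity) (by linarith)
          exact mul_nonpos_of_nonpos_of_nonneg h1 hS1n
        have hR : 0 ≤ (1-μ) * (q0*(1-q0))^x * (1-2*q0) * Ssum q0 (n - 2*x0 + 2*k) := by
          have h1 : 0 ≤ (1-μ) * (q0*(1-q0))^x * (1-2*q0) :=
            mul_nonneg (mul_nonneg (by linarith) (by positivity)) (by linarith)
          exact mul_nonneg h1 hS0n
        linarith
      · -- both biases ≥ 1/2: use the symmetry q ↦ 1-q
        push_neg at hc0
        have hbase : Ssum (1-q0) (n - 2*x0) ≤ Ssum (1-q1) (n - 2*x0) := by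
          rw [Ssum_sym q0, Ssum_sym q1, hSone q1, hSone q0]
        have cr := cross (1-q1) (1-q0) hb1 (by linarith) (by linarith) (n - 2*x0) hbase k
        rw [Ssum_sym q0, Ssum_sym q1, sub_sub_cancel, sub_sub_cancel] at cr
        have hB : (0:ℝ) ≤ (1-μ) * (2*q0-1) * (q0*(1-q0))^x :=
          mul_nonneg (mul_nonneg (by linarith) (by linarith)) (by positivity)
        have H' : (1-μ) * (2*q0-1) * (q0*(1-q0))^x0 ≤ μ * (2*q1-1) * (q1*(1-q1))^x0 := by
          nlinarith [H]
        have key : (1-μ) * (2*q0-1) * (q0*(1-q0))^x * Ssum q0 (n - 2*x0 + 2*k) * (q1*(1-q1))^k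
            ≤ μ * (2*q1-1) * (q1*(1-q1))^x * Ssum q1 (n - 2*x0 + 2*k) * (q1*(1-q1))^k := by
          calc (1-μ) * (2*q0-1) * (q0*(1-q0))^x * Ssum q0 (n - 2*x0 + 2*k) * (q1*(1-q1))^k
              = ((1-μ) * (2*q0-1) * (q0*(1-q0))^x) *
                  (Ssum q0 (n - 2*x0 + 2*k) * ((1-q1)*q1)^k) := by ring
            _ ≤ ((1-μ) * (2*q0-1) * (q0*(1-q0))^x) *
                  (Ssum q1 (n - 2*x0 + 2*k) * ((1-q0)*q0)^k) :=
                mul_le_mul_of_nonneg_left cr hB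
            _ = ((1-μ) * (2*q0-1) * (q0*(1-q0))^x0) * Ssum q1 (n - 2*x0 + 2*k) := by
                rw [hk, pow_add]; ring
            _ ≤ (μ * (2*q1-1) * (q1*(1-q1))^x0) * Ssum q1 (n - 2*x0 + 2*k) :=
                mul_le_mul_of_nonneg_right H' hS1n
            _ = μ * (2*q1-1) * (q1*(1-q1))^x * Ssum q1 (n - 2*x0 + 2*k) * (q1*(1-q1))^k := by
                rw [hk, pow_add]; ring
        have key2 := le_of_mul_le_mul_right key hP1
        nlinarith [key2]
end

section
/- The λ-inequality holds unconditionally for at most two experts: for every λ > 0 and all reals q_0, q_1 with ψ_λ(0) < q_0 ≤ q_1 ≤ 1/2, (1 − 2q_1)/(ψ_λ(1) − q_1) ≤ (1 − 2q_0)/(ψ_λ(1) − q_0) · (2λ + ln(1−q_0) − ln q_0)/(2λ − ln(1−q_0) + ln q_0). -/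
open Real

/-- **The λ-inequality holds unconditionally for at most two experts.** For every
`λ > 0` and all reals `q₀, q₁` with `ψ_λ(0) < q₀ ≤ q₁ ≤ 1/2`,
`(1 − 2q₁)/(ψ_λ(1) − q₁) ≤ (1 − 2q₀)/(ψ_λ(1) − q₀) ·
(2λ + ln(1−q₀) − ln q₀)/(2λ − ln(1−q₀) + ln q₀)`. -/
theorem lambda_inequality_two_experts (lam q0 q1 : ℝ) (hlam : 0 < lam)
    (h0 : psi lam 0 < q0) (h01 : q0 ≤ q1) (h1 : q1 ≤ 1 / 2) :
    (1 - 2 * q1) / (psi lam 1 - q1) ≤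
      (1 - 2 * q0) / (psi lam 1 - q0) *
        ((2 * lam + Real.log (1 - q0) - Real.log q0) /
          (2 * lam - Real.log (1 - q0) + Real.log q0)) := by
  have harg : 2 * lam * (1 - 2 * 1) = -(2 * lam) := by ring
  have hψ : psi lam 1 = 1 / (1 + Real.exp (-(2 * lam))) := by
    unfold psi; rw [harg]
  have hE : Real.exp (-(2 * lam)) < 1 := Real.exp_lt_one_iff.mpr (by linarith)
  have hEpos : 0 < Real.exp (-(2 * lam)) := Real.exp_pos _
  have hψhalf : 1 / 2 < psi lam 1 := by
    rw [hψ, div_lt_div_iff₀ (by norm_num) (by positivity)]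
    linarith
  have hq0pos : 0 < q0 := lt_trans (by unfold psi; positivity) h0
  have hq05 : q0 ≤ 1 / 2 := le_trans h01 h1
  have h1q0 : (0 : ℝ) < 1 - q0 := by linarith
  have hL0 : 0 ≤ Real.log (1 - q0) - Real.log q0 := by
    have := Real.log_le_log hq0pos (by linarith : q0 ≤ 1 - q0)
    linarith
  have harg0 : 2 * lam * (1 - 2 * 0) = 2 * lam := by ring
  have hL2 : Real.log (1 - q0) - Real.log q0 < 2 * lam := by
    have hEp : (0 : ℝ) < Real.exp (2 * lam) := Real.exp_pos _
    have h0' : 1 / (1 + Real.exp (2 * lam)) < q0 := by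
      have h : psi lam 0 = 1 / (1 + Real.exp (2 * lam)) := by unfold psi; rw [harg0]
      linarith [h ▸ h0]
    have hlt : (1 - q0) / q0 < Real.exp (2 * lam) := by
      rw [div_lt_iff₀ hq0pos]
      rw [div_lt_iff₀ (by positivity)] at h0'
      nlinarith
    calc Real.log (1 - q0) - Real.log q0
        = Real.log ((1 - q0) / q0) := (Real.log_div (by linarith) (by linarith)).symm
      _ < 2 * lam := by
          rw [← Real.log_exp (2 * lam)]
          exact Real.log_lt_log (by positivity) hlt
  have hd0 : 0 < psi lam 1 - q0 := by linarith
  have hd1 : 0 < psi lam 1 - q1 := by linarith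
  have hf0 : 0 ≤ (1 - 2 * q0) / (psi lam 1 - q0) := div_nonneg (by linarith) hd0.le
  have hmono : (1 - 2 * q1) / (psi lam 1 - q1) ≤ (1 - 2 * q0) / (psi lam 1 - q0) := by
    rw [div_le_div_iff₀ hd1 hd0]
    nlinarith [mul_nonneg (sub_nonneg.mpr h01) (by linarith : (0:ℝ) ≤ 2 * psi lam 1 - 1)]
  have hfac : 1 ≤ (2 * lam + Real.log (1 - q0) - Real.log q0) /
      (2 * lam - Real.log (1 - q0) + Real.log q0) := by
    rw [le_div_iff₀ (by linarith)]
    linarith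
  calc (1 - 2 * q1) / (psi lam 1 - q1) ≤ (1 - 2 * q0) / (psi lam 1 - q0) := hmono
    _ ≤ _ := le_mul_of_one_le_right hf0 hfac
end
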